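/- arXiv:1710.04856 — 6 statements merged into one kernel-verified Lean document; each statement's English description precedes it below -/
import Mathlib

section
/- (MacMahon's Master Theorem.) Let S ≥ 1, let A = (a_{js}) be an S×S matrix with entries in ℂ (or any commutative ring), and let x_1,…,x_S be formal variables. Let V denote the S×S diagonal matrix with diagonal entries x_1,…,x_S, so that I − V·A is a matrix with entries in the multivariate polynomial ring in x_1,…,x_S. Since det(I − V·A) has constant coefficient 1, it is invertible as a multivariate formal power series; let f = 1/det(I − V·A) be this inverse. Then for every tuple of natural numbers (n_1,…,n_S), the coefficient of the monomial x_1^{n_1}⋯x_S^{n_S} in the polynomial ∏_{j=1}^{S} (a_{j1}x_1 + ⋯ + a_{jS}x_S)^{n_j} equals the coefficient of x_1^{n_1}⋯x_S^{n_S} in f. -/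
open MvPolynomial

namespace MacMahonAux

open Matrix Finset

variable {ι R : Type*} [Fintype ι] [DecidableEq ι] [CommRing R]

/-- column-masked matrix: columns in `J` from `M`, identity columns elsewhere. -/
def maskCol (J : Finset ι) (M : Matrix ι ι R) : Matrix ι ι R :=
  Matrix.of fun j s => if s ∈ J then M j s else if j = s then (1:R) else 0

lemma det_diagonal_add_sum (d : ι → R) (M : Matrix ι ι R) :
    (Matrix.diagonal d + M).det
      = ∑ J : Finset ι, (∏ s ∈ Jᶜ, d s) * (maskCol J M).det := by
  rw [Matrix.det_apply]
  have key : ∀ σ : Equiv.Perm ι, ∏ i, (Matrix.diagonal d + M) (σ i) i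
      = ∑ J : Finset ι, (∏ s ∈ Jᶜ, d s) * ∏ i, maskCol J M (σ i) i := by
    intro σ
    have h1 : ∀ i, (Matrix.diagonal d + M) (σ i) i
        = M (σ i) i + (if σ i = i then (1:R) else 0) * d i := by
      intro i
      by_cases h : σ i = i <;>
        simp [Matrix.diagonal_apply, h, Matrix.add_apply, add_comm]
    simp_rw [h1]
    rw [Finset.prod_add, Finset.powerset_univ]
    refine Finset.sum_congr rfl fun J _ => ?_
    rw [Finset.prod_mul_distrib, ← Finset.compl_eq_univ_sdiff]
    rw [← Finset.prod_mul_prod_compl J (fun i => maskCol J M (σ i) i)]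
    have hJ : ∀ i ∈ J, maskCol J M (σ i) i = M (σ i) i := by
      intro i hi; simp [maskCol, hi]
    have hJc : ∀ i ∈ Jᶜ, maskCol J M (σ i) i = if σ i = i then (1:R) else 0 := by
      intro i hi; simp only [Finset.mem_compl] at hi; simp [maskCol, hi]
    rw [Finset.prod_congr rfl hJ, Finset.prod_congr rfl hJc]
    ring
  simp_rw [key, Finset.smul_sum]
  rw [Finset.sum_comm]
  refine Finset.sum_congr rfl fun J _ => ?_
  rw [Matrix.det_apply, Finset.mul_sum]
  refine Finset.sum_congr rfl fun σ _ => ?_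
  rw [mul_smul_comm]

lemma det_maskCol (J : Finset ι) (M : Matrix ι ι R) :
    (maskCol J M).det
      = (M.submatrix (fun j : {x // x ∈ J} => (j : ι)) (fun s : {x // x ∈ J} => (s : ι))).det := by
  classical
  let e : {x // x ∈ J} ⊕ {x // x ∉ J} ≃ ι := Equiv.sumCompl (· ∈ J)
  rw [← Matrix.det_submatrix_equiv_self e]
  have hblock : (maskCol J M).submatrix e e
      = Matrix.fromBlocks
          (M.submatrix (fun j : {x // x ∈ J} => (j : ι)) (fun s : {x // x ∈ J} => (s : ι)))
          0
          (M.submatrix (fun j : {x // x ∉ J} => (j : ι)) (fun s : {x // x ∈ J} => (s : ι)))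
          1 := by
    ext j s
    cases j with
    | inl j =>
      cases s with
      | inl s => simp [maskCol, e, s.prop]
      | inr s =>
        have hne : (j : ι) ≠ (s : ι) := by
          intro h
          exact s.prop (h ▸ j.prop)
        simp [maskCol, e, s.prop, hne]
    | inr j =>
      cases s with
      | inl s => simp [maskCol, e, s.prop]
      | inr s =>
        have : ((j : ι) = (s : ι)) = (j = s) := by
          simp [Subtype.ext_iff]
        simp [maskCol, e, s.prop, Matrix.one_apply, this]
  rw [hblock, Matrix.det_fromBlocks_zero₁₂, Matrix.det_one, mul_one]

variable {σK : Type*}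

lemma coeff_aeval_ite {K : Type*} [CommRing K] [DecidableEq σK] (T : Finset σK)
    (p : MvPolynomial σK K) (m : σK →₀ ℕ) (hm : m.support ⊆ T) :
    coeff m (aeval (fun s => if s ∈ T then (X s : MvPolynomial σK K) else 0) p) = coeff m p := by
  set g : σK → MvPolynomial σK K := fun s => if s ∈ T then X s else 0 with hg
  have key : ∀ u : σK →₀ ℕ, ∀ c : K,
      coeff m (aeval g (monomial u c)) = coeff m (monomial u c) := by
    intro u c
    by_cases hu : ∀ i ∈ u.support, i ∈ T
    · have h1 : aeval g (monomial u c) = monomial u c := by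
        rw [aeval_monomial, monomial_eq]
        congr 1
        apply Finsupp.prod_congr
        intro i hi
        rw [hg]
        simp only [if_pos (hu i hi)]
      rw [h1]
    · push_neg at hu
      obtain ⟨i, hi, hiT⟩ := hu
      have h0 : aeval g (monomial u c) = 0 := by
        rw [aeval_monomial]
        have h2 : (u.prod fun i k => g i ^ k) = 0 := by
          rw [Finsupp.prod]
          apply Finset.prod_eq_zero hi
          rw [hg]
          simp only [if_neg hiT]
          exact zero_pow (Finsupp.mem_support_iff.mp hi)
        rw [h2, mul_zero]
      rw [h0, coeff_zero, coeff_monomial, if_neg]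
      intro h
      subst h
      exact hiT (hm hi)
  conv_lhs => rw [p.as_sum]
  conv_rhs => rw [p.as_sum]
  rw [map_sum]
  rw [coeff_sum, coeff_sum]
  exact Finset.sum_congr rfl fun u _ => key u _

lemma det_scaled (S : ℕ) (A : Matrix (Fin S) (Fin S) ℂ)
    (u v : Fin S → MvPolynomial (Fin S) ℂ) (J : Finset (Fin S)) :
    (Matrix.of (fun j s : {x // x ∈ J} =>
        u (j : Fin S) * C (A (j : Fin S) (s : Fin S)) * v (s : Fin S))).det
      = (∏ j ∈ J, u j) * C ((A.submatrix
          (fun j : {x // x ∈ J} => (j : Fin S)) (fun s : {x // x ∈ J} => (s : Fin S))).det)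
          * ∏ s ∈ J, v s := by
  have h1 : (Matrix.of (fun j s : {x // x ∈ J} =>
        u (j : Fin S) * C (A (j : Fin S) (s : Fin S)) * v (s : Fin S)))
      = Matrix.diagonal (fun j : {x // x ∈ J} => u (j : Fin S)) *
          ((A.submatrix (fun j : {x // x ∈ J} => (j : Fin S))
            (fun s : {x // x ∈ J} => (s : Fin S))).map C) *
          Matrix.diagonal (fun s : {x // x ∈ J} => v (s : Fin S)) := by
    ext j s
    simp [Matrix.mul_diagonal, Matrix.diagonal_mul, Matrix.map_apply]
  rw [h1, Matrix.det_mul, Matrix.det_mul, Matrix.det_diagonal, Matrix.det_diagonal,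
    ← RingHom.mapMatrix_apply, ← RingHom.map_det]
  rw [Finset.prod_coe_sort J u, Finset.prod_coe_sort J v]

variable {S : ℕ}

/-- The 0/1 exponent vector of a subset. -/
noncomputable def eJ (J : Finset (Fin S)) : Fin S →₀ ℕ := ∑ s ∈ J, Finsupp.single s 1

lemma eJ_apply (J : Finset (Fin S)) (j : Fin S) : eJ J j = if j ∈ J then 1 else 0 := by
  classical
  rw [eJ, Finsupp.finset_sum_apply]
  simp [Finsupp.single_apply]

/-- principal minor -/
noncomputable def minor (A : Matrix (Fin S) (Fin S) ℂ) (J : Finset (Fin S)) : ℂ :=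
  (A.submatrix (fun j : {x // x ∈ J} => (j : Fin S)) (fun s : {x // x ∈ J} => (s : Fin S))).det

lemma prod_X_eJ (J : Finset (Fin S)) :
    (∏ s ∈ J, X s : MvPolynomial (Fin S) ℂ) = monomial (eJ J) 1 := by
  classical
  induction J using Finset.induction_on with
  | empty => simp [eJ]
  | insert _ _ ha ih =>
    rw [Finset.prod_insert ha, ih, X, monomial_mul, mul_one]
    congr 1
    rw [eJ, eJ, Finset.sum_insert ha]

lemma detD_eq (A : Matrix (Fin S) (Fin S) ℂ) :
    (1 - (Matrix.diagonal fun j : Fin S => (X j : MvPolynomial (Fin S) ℂ)) * A.map C).det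
      = ∑ J : Finset (Fin S), monomial (eJ J) ((-1 : ℂ) ^ J.card * minor A J) := by
  classical
  have h0 : (1 - (Matrix.diagonal fun j : Fin S => (X j : MvPolynomial (Fin S) ℂ)) * A.map C)
      = Matrix.diagonal (fun _ => (1 : MvPolynomial (Fin S) ℂ))
          + (-((Matrix.diagonal fun j : Fin S => (X j : MvPolynomial (Fin S) ℂ)) * A.map C)) := by
    rw [Matrix.diagonal_one, sub_eq_add_neg]
  rw [h0, det_diagonal_add_sum]
  refine Finset.sum_congr rfl fun J _ => ?_
  rw [prod_const_one, one_mul, det_maskCol]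
  have h1 : ((-((Matrix.diagonal fun j : Fin S => (X j : MvPolynomial (Fin S) ℂ)) *
        A.map C)).submatrix (fun j : {x // x ∈ J} => (j : Fin S))
          (fun s : {x // x ∈ J} => (s : Fin S)))
      = -(Matrix.of (fun j s : {x // x ∈ J} =>
          X (j : Fin S) * C (A (j : Fin S) (s : Fin S)) * 1)) := by
    ext j s
    simp [Matrix.diagonal_mul, Matrix.map_apply]
  rw [h1, Matrix.det_neg, det_scaled S A X (fun _ => (1 : MvPolynomial (Fin S) ℂ)) J,
    Fintype.card_coe, prod_const_one, mul_one, prod_X_eJ]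
  rw [mul_comm ((monomial (eJ J)) (1:ℂ)) (C _), C_mul_monomial, mul_one,
    show (-1 : MvPolynomial (Fin S) ℂ) = C (-1) from by simp, ← map_pow, C_mul_monomial]
  rfl

lemma vanish (A : Matrix (Fin S) (Fin S) ℂ) (m : Fin S →₀ ℕ) (hm : m ≠ 0) :
    ∑ J : Finset (Fin S), (if eJ J ≤ m then
        ((-1 : ℂ) ^ J.card * minor A J) *
          coeff (m - eJ J) (∏ j : Fin S, (∑ s : Fin S, C (A j s) * X s) ^ ((m - eJ J) j))
      else 0) = 0 := by
  classical
  set T : Finset (Fin S) := m.support with hT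
  set g : Fin S → MvPolynomial (Fin S) ℂ := fun s => if s ∈ T then X s else 0 with hgdef
  set L' : Fin S → MvPolynomial (Fin S) ℂ := fun j => ∑ s, C (A j s) * g s with hL'
  set M'' : Matrix (Fin S) (Fin S) (MvPolynomial (Fin S) ℂ) :=
    Matrix.of (fun j s => if j ∈ T then C (A j s) * g s else 0) with hM''
  set dd : Fin S → MvPolynomial (Fin S) ℂ := fun j => if j ∈ T then L' j else 1 with hdd
  set Q : MvPolynomial (Fin S) ℂ := ∏ j, L' j ^ (m j - if j ∈ T then 1 else 0) with hQ
  have main : ∀ J : Finset (Fin S),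
      (if eJ J ≤ m then
        ((-1 : ℂ) ^ J.card * minor A J) *
          coeff (m - eJ J) (∏ j : Fin S, (∑ s : Fin S, C (A j s) * X s) ^ ((m - eJ J) j))
      else 0)
      = coeff m (Q * ((∏ s ∈ Jᶜ, dd s) * (maskCol J (-M'')).det)) := by
    intro J
    by_cases hJT : J ⊆ T
    · -- the main case
      have hle : eJ J ≤ m := by
        rw [Finsupp.le_def]
        intro j
        rw [eJ_apply]
        by_cases hj : j ∈ J
        · rw [if_pos hj]
          have : m j ≠ 0 := Finsupp.mem_support_iff.mp (hJT hj)
          omega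
        · rw [if_neg hj]; exact Nat.zero_le _
      rw [if_pos hle]
      -- step a : replace the full linear forms by the truncated ones
      have hsupp : (m - eJ J).support ⊆ T := hT ▸ Finsupp.support_tsub
      have haev : (aeval g) (∏ j : Fin S, (∑ s : Fin S, C (A j s) * X s) ^ ((m - eJ J) j))
          = ∏ j : Fin S, L' j ^ ((m - eJ J) j) := by
        rw [map_prod]
        refine Finset.prod_congr rfl fun j _ => ?_
        rw [map_pow, map_sum]
        congr 1
        refine Finset.sum_congr rfl fun s _ => ?_
        rw [_root_.map_mul, aeval_C, aeval_X, MvPolynomial.algebraMap_eq]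
      have hstepa : coeff (m - eJ J) (∏ j : Fin S, (∑ s : Fin S, C (A j s) * X s) ^ ((m - eJ J) j))
          = coeff (m - eJ J) (∏ j : Fin S, L' j ^ ((m - eJ J) j)) := by
        rw [← coeff_aeval_ite T _ _ hsupp, haev]
      rw [hstepa]
      -- step d : factor the product
      have hexp : ∀ j : Fin S, (m - eJ J) j
          = (m j - if j ∈ T then 1 else 0) + (if j ∈ T \ J then 1 else 0) := by
        intro j
        rw [Finsupp.tsub_apply, eJ_apply]
        by_cases hj : j ∈ J
        · have hjT : j ∈ T := hJT hj
          have hmj : m j ≠ 0 := Finsupp.mem_support_iff.mp hjT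
          have hsd : j ∉ T \ J := by simp [hj]
          rw [if_pos hj, if_pos hjT, if_neg hsd]
          omega
        · by_cases hjT : j ∈ T
          · have hmj : m j ≠ 0 := Finsupp.mem_support_iff.mp hjT
            have hsd : j ∈ T \ J := Finset.mem_sdiff.mpr ⟨hjT, hj⟩
            rw [if_neg hj, if_pos hjT, if_pos hsd]
            omega
          · have hmj : m j = 0 := Finsupp.notMem_support_iff.mp (hT ▸ hjT)
            have hsd : j ∉ T \ J := by simp [hjT]
            rw [if_neg hj, if_neg hjT, if_neg hsd]
            omega
      have hstepd : (∏ j : Fin S, L' j ^ ((m - eJ J) j)) = Q * ∏ s ∈ Jᶜ, dd s := by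
        calc (∏ j : Fin S, L' j ^ ((m - eJ J) j))
            = ∏ j : Fin S, (L' j ^ (m j - if j ∈ T then 1 else 0) *
                L' j ^ (if j ∈ T \ J then 1 else 0)) := by
              refine Finset.prod_congr rfl fun j _ => ?_
              rw [← pow_add, ← hexp]
          _ = Q * ∏ j : Fin S, L' j ^ (if j ∈ T \ J then 1 else 0) := by
              rw [Finset.prod_mul_distrib]
          _ = Q * ∏ s ∈ Jᶜ, dd s := by
              congr 1
              have h2 : ∀ j : Fin S, L' j ^ (if j ∈ T \ J then 1 else 0)
                  = (if j ∈ T \ J then L' j else 1) := by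
                intro j; by_cases hj : j ∈ T \ J <;> simp [hj]
              rw [Finset.prod_congr rfl fun j _ => h2 j]
              rw [Finset.prod_ite_mem univ (T \ J) L', Finset.univ_inter]
              have h3 : ∀ s ∈ Jᶜ, dd s = (if s ∈ T then L' s else 1) := fun s _ => rfl
              rw [Finset.prod_congr rfl h3, Finset.prod_ite_mem Jᶜ T L']
              congr 1
              ext x
              simp [Finset.mem_sdiff, Finset.mem_inter, Finset.mem_compl, and_comm]
      rw [hstepd]
      -- step c : identify the monomial with the masked determinant
      have hstepc : (maskCol J (-M'')).det
          = monomial (eJ J) ((-1 : ℂ) ^ J.card * minor A J) := by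
        rw [det_maskCol]
        have h1 : ((-M'').submatrix (fun j : {x // x ∈ J} => (j : Fin S))
              (fun s : {x // x ∈ J} => (s : Fin S)))
            = -(Matrix.of (fun j s : {x // x ∈ J} =>
                (1 : MvPolynomial (Fin S) ℂ) * C (A (j : Fin S) (s : Fin S)) * g (s : Fin S))) := by
          ext j s
          have hjT : (j : Fin S) ∈ T := hJT j.prop
          simp [hM'', Matrix.submatrix_apply, hjT]
        rw [h1, Matrix.det_neg, det_scaled S A (fun _ => (1 : MvPolynomial (Fin S) ℂ)) g J,
          Fintype.card_coe, prod_const_one, one_mul]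
        have h2 : (∏ s ∈ J, g s) = monomial (eJ J) (1 : ℂ) := by
          rw [← prod_X_eJ]
          refine Finset.prod_congr rfl fun s hs => ?_
          rw [hgdef]
          simp only [if_pos (hJT hs)]
        rw [h2, C_mul_monomial, mul_one,
          show (-1 : MvPolynomial (Fin S) ℂ) = C (-1) from by simp, ← map_pow, C_mul_monomial]
        rfl
      rw [hstepc]
      -- step b : coefficient extraction
      rw [show Q * ((∏ s ∈ Jᶜ, dd s) * monomial (eJ J) ((-1 : ℂ) ^ J.card * minor A J))
          = (Q * (∏ s ∈ Jᶜ, dd s)) * monomial (eJ J) ((-1 : ℂ) ^ J.card * minor A J) from by ring]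
      rw [coeff_mul_monomial', if_pos hle, mul_comm]
    · -- J not inside the support : both sides vanish
      have hnot : ¬ eJ J ≤ m := by
        obtain ⟨j₀, hj₀J, hj₀T⟩ := Finset.not_subset.mp hJT
        intro hle
        have h1 := (Finsupp.le_def.mp hle) j₀
        rw [eJ_apply, if_pos hj₀J] at h1
        have : m j₀ = 0 := Finsupp.notMem_support_iff.mp (hT ▸ hj₀T)
        omega
      rw [if_neg hnot]
      obtain ⟨j₀, hj₀J, hj₀T⟩ := Finset.not_subset.mp hJT
      have hdet0 : (maskCol J (-M'')).det = 0 := by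
        apply Matrix.det_eq_zero_of_column_eq_zero j₀
        intro i
        have hg0 : g j₀ = 0 := by rw [hgdef]; simp only [if_neg hj₀T]
        simp only [maskCol, Matrix.of_apply, if_pos hj₀J, Matrix.neg_apply, hM'']
        by_cases hi : i ∈ T <;> simp [hi, hg0]
      rw [hdet0, mul_zero, mul_zero, coeff_zero]
  rw [Finset.sum_congr rfl fun J _ => main J, ← coeff_sum, ← Finset.mul_sum,
    ← det_diagonal_add_sum dd (-M'')]
  have hdet : (Matrix.diagonal dd + -M'').det = 0 := by
    rw [← Matrix.exists_mulVec_eq_zero_iff]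
    refine ⟨(fun s => if s ∈ T then (1 : MvPolynomial (Fin S) ℂ) else 0), ?_, ?_⟩
    · obtain ⟨t, ht⟩ := Finsupp.support_nonempty_iff.mpr hm
      intro h0
      have := congrFun h0 t
      have ht' : t ∈ T := hT ▸ ht
      simp only [if_pos ht', Pi.zero_apply] at this
      exact one_ne_zero this
    · funext j
      simp only [Matrix.mulVec, dotProduct, Pi.zero_apply]
      have hsplit : ∀ s : Fin S, (Matrix.diagonal dd + -M'') j s *
          (if s ∈ T then (1 : MvPolynomial (Fin S) ℂ) else 0)
          = Matrix.diagonal dd j s * (if s ∈ T then 1 else 0)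
            - M'' j s * (if s ∈ T then 1 else 0) := by
        intro s
        rw [Matrix.add_apply, Matrix.neg_apply]
        ring
      rw [Finset.sum_congr rfl fun s _ => hsplit s, Finset.sum_sub_distrib]
      have h1 : ∑ s : Fin S, Matrix.diagonal dd j s * (if s ∈ T then (1:MvPolynomial (Fin S) ℂ) else 0)
          = dd j * (if j ∈ T then 1 else 0) := by
        rw [Finset.sum_eq_single j]
        · rw [Matrix.diagonal_apply_eq]
        · intro s _ hs
          rw [Matrix.diagonal_apply_ne _ (Ne.symm hs), zero_mul]
        · intro h; exact absurd (Finset.mem_univ j) h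
      have h2 : ∑ s : Fin S, M'' j s * (if s ∈ T then (1:MvPolynomial (Fin S) ℂ) else 0)
          = dd j * (if j ∈ T then 1 else 0) := by
        by_cases hj : j ∈ T
        · have : ∀ s : Fin S, M'' j s * (if s ∈ T then (1:MvPolynomial (Fin S) ℂ) else 0)
              = C (A j s) * g s := by
            intro s
            simp only [hM'', Matrix.of_apply, if_pos hj]
            by_cases hs : s ∈ T
            · rw [if_pos hs, mul_one]
            · rw [if_neg hs, mul_zero, hgdef]
              simp only [if_neg hs, mul_zero]
          rw [Finset.sum_congr rfl fun s _ => this s]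
          rw [hdd]
          simp only [if_pos hj, mul_one]
          rfl
        · have : ∀ s : Fin S, M'' j s * (if s ∈ T then (1:MvPolynomial (Fin S) ℂ) else 0) = 0 := by
            intro s
            simp only [hM'', Matrix.of_apply, if_neg hj, zero_mul]
          rw [Finset.sum_congr rfl fun s _ => this s, Finset.sum_const_zero]
          simp only [if_neg hj, mul_zero]
      rw [h1, h2, sub_self]
  rw [hdet, mul_zero, coeff_zero]

/-- The MacMahon generating series. -/
noncomputable def Fser (S : ℕ) (A : Matrix (Fin S) (Fin S) ℂ) : MvPowerSeries (Fin S) ℂ :=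
  fun m => coeff m (∏ j : Fin S, (∑ s : Fin S, C (A j s) * X s) ^ m j)

lemma mul_eq_one (S : ℕ) (A : Matrix (Fin S) (Fin S) ℂ) :
    ((((1 - (Matrix.diagonal fun j : Fin S => (X j : MvPolynomial (Fin S) ℂ)) * A.map C).det :
        MvPolynomial (Fin S) ℂ) : MvPowerSeries (Fin S) ℂ) *
      Fser S A) = 1 := by
  classical
  apply MvPowerSeries.ext
  intro m
  rw [detD_eq A]
  rw [show ((((∑ J : Finset (Fin S), monomial (eJ J) ((-1:ℂ)^J.card * minor A J)) :
      MvPolynomial (Fin S) ℂ)) : MvPowerSeries (Fin S) ℂ)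
    = ∑ J : Finset (Fin S), (((monomial (eJ J) ((-1:ℂ)^J.card * minor A J) :
        MvPolynomial (Fin S) ℂ)) : MvPowerSeries (Fin S) ℂ) from
      map_sum (MvPolynomial.coeToMvPowerSeries.ringHom) _ _]
  rw [Finset.sum_mul, map_sum]
  simp_rw [MvPolynomial.coe_monomial, MvPowerSeries.coeff_monomial_mul]
  have hcoe : ∀ k : Fin S →₀ ℕ, MvPowerSeries.coeff k (Fser S A)
      = coeff k (∏ j : Fin S, (∑ s : Fin S, C (A j s) * X s) ^ k j) := fun k => rfl
  simp_rw [hcoe]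
  by_cases hm : m = 0
  · subst hm
    rw [Finset.sum_eq_single ∅]
    · have hemp : eJ (∅ : Finset (Fin S)) = 0 := by rw [eJ]; simp
      rw [hemp, if_pos le_rfl, tsub_zero]
      haveI : IsEmpty {x // x ∈ (∅ : Finset (Fin S))} := by
        constructor; rintro ⟨x, hx⟩; exact absurd hx (Finset.notMem_empty x)
      have hminor : minor A ∅ = 1 := Matrix.det_isEmpty
      rw [hminor, Finset.card_empty, pow_zero, one_mul, one_mul]
      have : ∀ j : Fin S, (0 : Fin S →₀ ℕ) j = 0 := fun j => rfl
      simp only [this, pow_zero, Finset.prod_const_one, coeff_zero_one]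
      rw [MvPowerSeries.coeff_zero_one]
    · intro J _ hJ
      rw [if_neg]
      intro hle
      obtain ⟨j₀, hj₀⟩ := Finset.nonempty_iff_ne_empty.mpr hJ
      have h1 := Finsupp.le_def.mp hle j₀
      rw [eJ_apply, if_pos hj₀] at h1
      simp at h1
    · intro h
      exact absurd (Finset.mem_univ ∅) h
  · rw [vanish A m hm]
    rw [MvPowerSeries.coeff_one, if_neg hm]

end MacMahonAux

open MacMahonAux in
/-- **MacMahon's Master Theorem.** For an `S × S` complex matrix `A` and the diagonal
matrix `V = diag(x_1, …, x_S)` of formal variables, the coefficient of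
`x_1^{n_1} ⋯ x_S^{n_S}` in `∏_j (a_{j1} x_1 + ⋯ + a_{jS} x_S)^{n_j}` equals the coefficient
of `x_1^{n_1} ⋯ x_S^{n_S}` in the formal power series inverse of `det (I - V·A)`. -/
theorem macmahon_master_theorem (S : ℕ) (hS : 1 ≤ S) (A : Matrix (Fin S) (Fin S) ℂ)
    (n : Fin S → ℕ) :
    MvPolynomial.coeff (Finsupp.equivFunOnFinite.symm n)
      (∏ j : Fin S, (∑ s : Fin S, MvPolynomial.C (A j s) * MvPolynomial.X s) ^ n j) =
    MvPowerSeries.coeff (Finsupp.equivFunOnFinite.symm n)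
      ((((1 - (Matrix.diagonal fun j : Fin S => (MvPolynomial.X j : MvPolynomial (Fin S) ℂ)) *
            A.map MvPolynomial.C).det : MvPolynomial (Fin S) ℂ) :
          MvPowerSeries (Fin S) ℂ)⁻¹) := by
  classical
  have hkey := MacMahonAux.mul_eq_one S A
  have h1 : MvPowerSeries.constantCoeff
        (((1 - (Matrix.diagonal fun j : Fin S => (X j : MvPolynomial (Fin S) ℂ)) *
          A.map C).det : MvPolynomial (Fin S) ℂ) : MvPowerSeries (Fin S) ℂ) *
      MvPowerSeries.constantCoeff (Fser S A) = 1 := by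
    rw [← _root_.map_mul, hkey, _root_.map_one]
  have hconst := left_ne_zero_of_mul_eq_one h1
  have hinv := (MvPowerSeries.inv_eq_iff_mul_eq_one hconst).mpr (by rw [mul_comm] at hkey; exact hkey)
  rw [hinv]
  rfl
end

section
/- (Generating function for the m-Bézout bound of semi-mixed multihomogeneous systems.) Let S ≥ 1, let n_1,…,n_S be natural numbers with N = n_1 + ⋯ + n_S, and let A = (a_{jk}) be an S×S matrix of natural numbers. Consider N linear forms in the variables x_1,…,x_S, partitioned into S blocks where the j-th block consists of n_j copies of the linear form a_{j1}x_1 + ⋯ + a_{jS}x_S. Let V be the S×S diagonal matrix with diagonal entries x_1,…,x_S. Then the coefficient of the monomial x_1^{n_1}⋯x_S^{n_S} in the product of these N linear forms, i.e. in ∏_{j=1}^{S} (a_{j1}x_1 + ⋯ + a_{jS}x_S)^{n_j} (this coefficient is the m-Bézout bound of the corresponding semi-mixed multihomogeneous system), equals the coefficient of x_1^{n_1}⋯x_S^{n_S} in the multivariate formal power series inverse of det(I − V·A). -/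
open MvPolynomial

open Finset

namespace MMTaux

noncomputable section

variable {S : ℕ} (A : Matrix (Fin S) (Fin S) ℕ)

abbrev R (S : ℕ) := MvPolynomial (Fin S) ℚ

def fp (j : Fin S) : R S := ∑ k, C (A j k : ℚ) * X k

def P (m : Fin S →₀ ℕ) : R S := ∏ j, fp A j ^ m j

def G : MvPowerSeries (Fin S) ℚ := fun m => coeff m (P A m)

def ind (r : Fin S → Bool) : Fin S →₀ ℕ :=
  Finsupp.equivFunOnFinite.symm fun j => if r j then 1 else 0

def dlt (r : Fin S → Bool) : ℚ :=
  Matrix.det (Matrix.of fun j => if r j then (fun k => (A j k : ℚ)) else Pi.single j 1)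

def sgn (r : Fin S → Bool) : ℚ := ∏ j, (if r j then (-1 : ℚ) else 1)

def D : R S :=
  (1 - (Matrix.diagonal fun j : Fin S => (X j : R S)) * A.map fun a => C ((a : ℚ))).det

lemma ind_apply (r : Fin S → Bool) (j : Fin S) : ind r j = if r j then 1 else 0 := rfl

-- multilinear expansion of the determinant
lemma det_expand {R' : Type*} [CommRing R'] (g h : Fin S → R')
    (B : Fin S → Fin S → R') :
    Matrix.det (Matrix.of fun j => g j • (Pi.single j 1 : Fin S → R') + h j • B j) =
    ∑ r : Fin S → Bool, (∏ j, (if r j then h j else g j)) *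
      Matrix.det (Matrix.of fun j => if r j then B j else (Pi.single j 1 : Fin S → R')) := by
  let f := (Matrix.detRowAlternating : (Fin S → R') [⋀^Fin S]→ₗ[R'] R').toMultilinearMap
  have keyrows : (fun j => g j • (Pi.single j 1 : Fin S → R') + h j • B j) =
      fun j => ∑ b : Bool, (if b then h j • B j else g j • (Pi.single j 1 : Fin S → R')) := by
    funext j; simp [Fintype.sum_bool, add_comm]
  show f (fun j => g j • (Pi.single j 1 : Fin S → R') + h j • B j) = _
  rw [keyrows, f.map_sum]
  refine Finset.sum_congr rfl fun r _ => ?_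
  have : (fun j => if r j then h j • B j else g j • (Pi.single j 1 : Fin S → R')) =
      fun j => (if r j then h j else g j) • (if r j then B j else (Pi.single j 1 : Fin S → R')) := by
    funext j; by_cases hr : r j <;> simp [hr]
  rw [this, f.map_smul_univ]
  rfl

lemma detW_C (r : Fin S → Bool) :
    Matrix.det (Matrix.of fun j => if r j then (fun k => (C (A j k : ℚ) : R S))
      else (Pi.single j 1 : Fin S → R S)) = C (dlt A r) := by
  rw [dlt, RingHom.map_det]
  congr 1
  ext j k
  by_cases h : r j <;>
    simp [h, Matrix.map_apply, Pi.single_apply, apply_ite (C : ℚ → R S)]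

lemma C_sgn (r : Fin S → Bool) :
    (C (sgn r) : R S) = ∏ j, (if r j then (-1 : R S) else 1) := by
  rw [sgn, map_prod]
  exact Finset.prod_congr rfl fun j _ => by by_cases h : r j <;> simp [h]

lemma prod_ite_neg (r : Fin S → Bool) (y z : Fin S → R S) :
    ∏ j, (if r j then -y j else z j) = C (sgn r) * ∏ j, (if r j then y j else z j) := by
  rw [C_sgn, ← Finset.prod_mul_distrib]
  exact Finset.prod_congr rfl fun j _ => by by_cases h : r j <;> simp [h]

lemma prod_X_pow_univ (s : Fin S →₀ ℕ) :
    ∏ j, (X j : R S) ^ s j = monomial s 1 := by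
  classical
  rw [← MvPolynomial.prod_X_pow_eq_monomial]
  exact (Finset.prod_subset (Finset.subset_univ _) fun x _ hx => by
    simp [Finsupp.notMem_support_iff.mp hx]).symm

lemma prod_ite_X (r : Fin S → Bool) :
    ∏ j, (if r j then (X j : R S) else 1) = monomial (ind r) 1 := by
  rw [← prod_X_pow_univ (ind r)]
  exact Finset.prod_congr rfl fun j _ => by
    by_cases h : r j <;> simp [h, ind_apply]

lemma D_eq : D A = ∑ r : Fin S → Bool, monomial (ind r) (sgn r * dlt A r) := by
  have h1 : (1 - (Matrix.diagonal fun j : Fin S => (X j : R S)) * A.map fun a => C ((a : ℚ)))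
      = Matrix.of fun j => (1 : R S) • (Pi.single j 1 : Fin S → R S) +
          (-(X j : R S)) • (fun k => (C (A j k : ℚ) : R S)) := by
    ext j k
    by_cases h : j = k <;>
      simp [h, Matrix.one_apply, Matrix.diagonal_mul, Matrix.map_apply, Pi.single_apply,
        sub_eq_add_neg, eq_comm]
  rw [D, h1, det_expand]
  refine Finset.sum_congr rfl fun r _ => ?_
  rw [detW_C]
  have h2 : ∏ j, (if r j then -(X j : R S) else (1 : R S)) = C (sgn r) * monomial (ind r) 1 := by
    rw [prod_ite_neg r X (fun _ => 1), prod_ite_X]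
  rw [h2, mul_assoc, mul_comm ((monomial (ind r)) (1:ℚ)), C_mul_monomial, mul_one,
    C_mul_monomial]


lemma coeff_aeval (m : Fin S →₀ ℕ) (Q : R S) :
    coeff m (aeval (fun k => if m k ≠ 0 then (X k : R S) else 0) Q) = coeff m Q := by
  induction Q using MvPolynomial.induction_on' with
  | add p q hp hq => rw [map_add, coeff_add, coeff_add, hp, hq]
  | monomial d c =>
    by_cases hd : ∀ k ∈ d.support, m k ≠ 0
    · have h : aeval (fun k => if m k ≠ 0 then (X k : R S) else 0) (monomial d c)
          = monomial d c := by
        rw [aeval_monomial]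
        have h2 : (d.prod fun n e => (if m n ≠ 0 then (X n : R S) else 0) ^ e)
            = d.prod fun n e => (X n : R S) ^ e :=
          Finsupp.prod_congr fun k hk => by rw [if_pos (hd k hk)]
        rw [h2, algebraMap_eq, ← monomial_eq]
      rw [h]
    · push_neg at hd
      obtain ⟨k0, hk0s, hk0⟩ := hd
      have hz : aeval (fun k => if m k ≠ 0 then (X k : R S) else 0) (monomial d c) = 0 := by
        rw [aeval_monomial]
        have h2 : (d.prod fun n e => (if m n ≠ 0 then (X n : R S) else 0) ^ e) = 0 := by
          apply Finset.prod_eq_zero hk0s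
          simp only [hk0, ne_eq, not_true_eq_false, ite_false, not_not]
          exact zero_pow (Finsupp.mem_support_iff.mp hk0s)
        rw [h2, mul_zero]
      rw [hz, coeff_zero, coeff_monomial, if_neg]
      · intro hdm
        exact Finsupp.mem_support_iff.mp hk0s (hdm ▸ hk0)

lemma coeff_GD (m : Fin S →₀ ℕ) :
    MvPowerSeries.coeff m (G A * (↑(D A) : MvPowerSeries (Fin S) ℚ)) =
    ∑ r : Fin S → Bool, if ind r ≤ m then
      MvPowerSeries.coeff (m - ind r) (G A) * (sgn r * dlt A r) else 0 := by
  rw [D_eq]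
  have hc : ((∑ r : Fin S → Bool, monomial (ind r) (sgn r * dlt A r) : R S) :
      MvPowerSeries (Fin S) ℚ)
      = ∑ r : Fin S → Bool, MvPowerSeries.monomial (ind r) (sgn r * dlt A r) := by
    rw [← MvPolynomial.coeToMvPowerSeries.ringHom_apply, map_sum]
    exact Finset.sum_congr rfl fun r _ => MvPolynomial.coe_monomial _ _
  rw [hc, Finset.mul_sum, map_sum]
  exact Finset.sum_congr rfl fun r _ => MvPowerSeries.coeff_mul_monomial _ _ _ _

lemma constD : MvPowerSeries.constantCoeff (↑(D A) : MvPowerSeries (Fin S) ℚ) = 1 := by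
  have h0 : MvPowerSeries.constantCoeff (↑(D A) : MvPowerSeries (Fin S) ℚ) = MvPolynomial.coeff 0 (D A) := by
    rw [← MvPowerSeries.coeff_zero_eq_constantCoeff, MvPolynomial.coeff_coe]
  rw [h0, D_eq, ← MvPolynomial.constantCoeff_eq, map_sum]
  rw [Finset.sum_eq_single (fun _ => false)]
  · simp only [constantCoeff_monomial]
    have : ind (S := S) (fun _ => false) = 0 := by
      ext j; simp [ind_apply]
    rw [if_pos this]
    have hsgn : sgn (S := S) (fun _ => false) = 1 := by simp [sgn]
    have hdlt : dlt A (fun _ => false) = 1 := by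
      have : (Matrix.of fun j => if (fun _ => false : Fin S → Bool) j then
          (fun k => (A j k : ℚ)) else Pi.single j 1) = (1 : Matrix (Fin S) (Fin S) ℚ) := by
        ext j k
        simp [Matrix.one_apply, Pi.single_apply, eq_comm]
      rw [dlt, this, Matrix.det_one]
    rw [hsgn, hdlt, mul_one]
  · intro r _ hr
    rw [constantCoeff_monomial, if_neg]
    intro h
    apply hr
    funext j
    have := DFunLike.congr_fun h j
    rw [ind_apply] at this
    by_cases hj : r j
    · simp [hj] at this
    · simp [hj]
  · intro h
    exact absurd (Finset.mem_univ _) h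


lemma key (m : Fin S →₀ ℕ) (hm : m ≠ 0) :
    MvPowerSeries.coeff m (G A * (↑(D A) : MvPowerSeries (Fin S) ℚ)) = 0 := by
  classical
  set x' : Fin S → R S := fun k => if m k ≠ 0 then (X k : R S) else 0 with hx'
  set f' : Fin S → R S := fun j => aeval x' (fp A j) with hf'
  set g : Fin S → R S := fun j => if m j ≠ 0 then f' j else 1 with hg
  set base : R S := ∏ j, f' j ^ (m j - 1) with hbase
  set w : (Fin S → Bool) → R S :=
    fun r => (∏ j, if r j then -x' j else g j) * C (dlt A r) * base with hw
  have hx1 : ∀ j, m j ≠ 0 → x' j = X j := fun j h => by simp only [hx', if_pos h]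
  have hx0 : ∀ j, m j = 0 → x' j = 0 := fun j h => by simp [hx', h]
  have hgj1 : ∀ j, m j ≠ 0 → g j = f' j := fun j h => by simp only [hg, if_pos h]
  have hgj0 : ∀ j, m j = 0 → g j = 1 := fun j h => by simp [hg, h]
  have haeval : ∀ j, f' j = ∑ k, C ((A j k : ℚ)) * x' k := by
    intro j
    simp only [hf', fp, map_sum, map_mul, aeval_X, aeval_C, algebraMap_eq]
  have hterm : ∀ r : Fin S → Bool,
      (if ind r ≤ m then MvPowerSeries.coeff (m - ind r) (G A) * (sgn r * dlt A r) else 0)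
      = coeff m (w r) := by
    intro r
    by_cases hr : ind r ≤ m
    · have hmj : ∀ j, r j → m j ≠ 0 := by
        intro j hj
        have h1 := Finsupp.le_def.mp hr j
        rw [ind_apply, if_pos hj] at h1
        omega
      have hx'r : (∏ j, if r j then x' j else (1 : R S)) = monomial (ind r) 1 := by
        rw [← prod_ite_X r]
        refine Finset.prod_congr rfl fun j _ => ?_
        by_cases h : r j
        · rw [if_pos h, if_pos h, hx1 j (hmj j h)]
        · rw [if_neg h, if_neg h]
      have hsplit : (∏ j, if r j then x' j else g j)
          = (∏ j, if r j then x' j else (1 : R S)) * (∏ j, if r j then (1 : R S) else g j) := by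
        rw [← Finset.prod_mul_distrib]
        exact Finset.prod_congr rfl fun j _ => by by_cases h : r j <;> simp [h]
      have hbase2 : base * (∏ j, if r j then (1 : R S) else g j)
          = ∏ j, f' j ^ ((m - ind r) j) := by
        rw [hbase, ← Finset.prod_mul_distrib]
        refine Finset.prod_congr rfl fun j _ => ?_
        rw [Finsupp.tsub_apply, ind_apply]
        by_cases h : r j
        · rw [if_pos h, if_pos h, mul_one]
        · rw [if_neg h, if_neg h]
          by_cases h2 : m j = 0
          · rw [hgj0 j h2, h2, mul_one]
          · rw [hgj1 j h2, ← pow_succ, Nat.sub_zero, Nat.sub_add_cancel (by omega)]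
      have hPae : aeval x' (P A (m - ind r)) = ∏ j, f' j ^ ((m - ind r) j) := by
        rw [P, map_prod]
        exact Finset.prod_congr rfl fun j _ => by rw [map_pow]
      have hmono : aeval x' ((monomial (ind r) (1 : ℚ)) : R S) = monomial (ind r) 1 := by
        conv_lhs => rw [← prod_ite_X r]
        rw [map_prod, ← hx'r]
        refine Finset.prod_congr rfl fun j _ => ?_
        by_cases h : r j <;> simp [h]
      have hwr : w r = C (sgn r * dlt A r) *
          aeval x' ((monomial (ind r) (1 : ℚ)) * P A (m - ind r)) := by
        simp only [hw]
        rw [map_mul (aeval x'), hmono, hPae, prod_ite_neg r x' g, hsplit, hx'r,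
          map_mul (C : ℚ →+* R S), ← hbase2]
        ring
      rw [if_pos hr, hwr, coeff_C_mul, coeff_aeval]
      have h3 : coeff (ind r + (m - ind r)) ((monomial (ind r) (1 : ℚ)) * P A (m - ind r))
          = coeff (m - ind r) (P A (m - ind r)) := by
        rw [coeff_monomial_mul, one_mul]
      rw [add_tsub_cancel_of_le hr] at h3
      rw [h3]
      have h4 : MvPowerSeries.coeff (m - ind r) (G A)
          = coeff (m - ind r) (P A (m - ind r)) := rfl
      rw [h4]
      ring
    · rw [if_neg hr]
      obtain ⟨j0, hj0⟩ : ∃ j0, ¬ (ind r j0 ≤ m j0) := by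
        by_contra h
        push_neg at h
        exact hr (Finsupp.le_def.mpr h)
      have hrj0 : r j0 := by
        by_contra h
        rw [ind_apply, if_neg h] at hj0
        omega
      have hmj0 : m j0 = 0 := by
        rw [ind_apply, if_pos hrj0] at hj0
        omega
      have hw0 : w r = 0 := by
        simp only [hw]
        have hpz : (∏ j, if r j then -x' j else g j) = 0 := by
          apply Finset.prod_eq_zero (Finset.mem_univ j0)
          rw [if_pos hrj0, hx0 j0 hmj0, neg_zero]
        rw [hpz, zero_mul, zero_mul]

      rw [hw0, coeff_zero]
  rw [coeff_GD, Finset.sum_congr rfl fun r _ => hterm r, ← MvPolynomial.coeff_sum]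
  set Mx : Matrix (Fin S) (Fin S) (R S) := Matrix.of fun j =>
    g j • (Pi.single j 1 : Fin S → R S) + (-x' j) • (fun k => (C (A j k : ℚ) : R S)) with hMx
  have hdet : Mx.det = ∑ r : Fin S → Bool,
      (∏ j, if r j then -x' j else g j) * C (dlt A r) := by
    rw [hMx, det_expand]
    exact Finset.sum_congr rfl fun r _ => by rw [detW_C]
  have hdetsum : (∑ r : Fin S → Bool, w r) = Mx.det * base := by
    rw [hdet, Finset.sum_mul]
  have hdet0 : Mx.det = 0 := by
    rw [← Matrix.exists_mulVec_eq_zero_iff]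
    obtain ⟨j0, hj0⟩ : ∃ j0, m j0 ≠ 0 := by
      by_contra h
      push_neg at h
      exact hm (Finsupp.ext h)
    refine ⟨x', ?_, ?_⟩
    · intro h
      have h2 := congrFun h j0
      rw [hx1 j0 hj0] at h2
      exact MvPolynomial.X_ne_zero j0 h2
    · funext j
      have hmv : Mx.mulVec x' j = ∑ k, Mx j k * x' k := rfl
      have hrow : ∀ k, Mx j k = g j * (Pi.single j 1 : Fin S → R S) k
          + (-x' j) * C ((A j k : ℚ)) := by
        intro k
        simp [hMx, Matrix.of_apply]
      rw [hmv]
      have hsum : ∑ k, Mx j k * x' k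
          = (∑ k, g j * (Pi.single j 1 : Fin S → R S) k * x' k)
          + ∑ k, (-x' j) * C ((A j k : ℚ)) * x' k := by
        rw [← Finset.sum_add_distrib]
        exact Finset.sum_congr rfl fun k _ => by rw [hrow k, add_mul]
      have h1 : ∑ k, g j * (Pi.single j 1 : Fin S → R S) k * x' k = g j * x' j := by
        rw [Finset.sum_eq_single j]
        · simp
        · intro k _ hk
          simp [Pi.single_apply, hk.symm]
        · intro h
          exact absurd (Finset.mem_univ _) h
      have h2 : ∑ k, (-x' j) * C ((A j k : ℚ)) * x' k = -(x' j * f' j) := by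
        have e1 : ∀ k ∈ Finset.univ, (-x' j) * C ((A j k : ℚ)) * x' k
            = -(x' j * (C ((A j k : ℚ)) * x' k)) := fun k _ => by ring
        rw [Finset.sum_congr rfl e1, Finset.sum_neg_distrib, haeval j, Finset.mul_sum]
      rw [hsum, h1, h2]
      by_cases h : m j = 0
      · rw [hx0 j h, hgj0 j h]
        simp
      · rw [hgj1 j h]
        simp [mul_comm]
  rw [hdetsum, hdet0, zero_mul, coeff_zero]


lemma GD : G A * ↑(D A) = 1 := by
  ext m
  by_cases hm : m = 0
  · subst hm
    have hG : MvPowerSeries.constantCoeff (G A) = 1 := by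
      have h1 : MvPowerSeries.constantCoeff (G A) = coeff 0 (P A 0) := rfl
      have hP : P A 0 = 1 := by simp [P]
      rw [h1, hP]
      simp
    rw [MvPowerSeries.coeff_zero_eq_constantCoeff_apply, map_mul, hG, constD, one_mul]
    simp [MvPowerSeries.coeff_one]
  · rw [key A m hm, MvPowerSeries.coeff_one, if_neg hm]

end

end MMTaux


/-- **Generating function for the m-Bézout bound of semi-mixed multihomogeneous systems.**
For `S` blocks of `n_j` equations whose degree in the `k`-th variable block is `a_{jk}`,
the m-Bézout bound, i.e. the coefficient of `x_1^{n_1} ⋯ x_S^{n_S}` in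
`∏_j (a_{j1} x_1 + ⋯ + a_{jS} x_S)^{n_j}`, equals the coefficient of
`x_1^{n_1} ⋯ x_S^{n_S}` in the formal power series inverse of `det (I - V·A)`,
where `V = diag(x_1, …, x_S)`. -/
theorem mBezout_generating_function (S : ℕ) (hS : 1 ≤ S) (n : Fin S → ℕ) (N : ℕ)
    (hN : N = ∑ j, n j) (A : Matrix (Fin S) (Fin S) ℕ) :
    MvPolynomial.coeff (Finsupp.equivFunOnFinite.symm n)
      (∏ j : Fin S, (∑ k : Fin S, MvPolynomial.C ((A j k : ℚ)) * MvPolynomial.X k) ^ n j) =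
    MvPowerSeries.coeff (Finsupp.equivFunOnFinite.symm n)
      ((((1 - (Matrix.diagonal fun j : Fin S => (MvPolynomial.X j : MvPolynomial (Fin S) ℚ)) *
            A.map fun a => MvPolynomial.C ((a : ℚ))).det : MvPolynomial (Fin S) ℚ) :
          MvPowerSeries (Fin S) ℚ)⁻¹) := by
  have hinv : (↑(MMTaux.D A) : MvPowerSeries (Fin S) ℚ)⁻¹ = MMTaux.G A :=
    (MvPowerSeries.inv_eq_iff_mul_eq_one
      (by rw [MMTaux.constD]; exact one_ne_zero)).mpr (MMTaux.GD A)
  show MvPolynomial.coeff _ _ = MvPowerSeries.coeff _ ((↑(MMTaux.D A) : MvPowerSeries (Fin S) ℚ)⁻¹)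
  rw [hinv]
  rfl
end

section
/- Let S ≥ 1 and work in the polynomial ring ℤ[x_1,…,x_S]. Let M be the S×S matrix with entries M_{ii} = 1 on the diagonal and M_{ij} = −x_i for i ≠ j. Then det M = 1 − σ_2 − 2σ_3 − ⋯ − (S−1)σ_S, where σ_j denotes the j-th elementary symmetric polynomial in x_1,…,x_S; equivalently, det M = 1 − ∑_{j=2}^{S} (j−1)·σ_j. -/
open MvPolynomial

section Aux
open Finset Matrix

variable {ι : Type*} [Fintype ι] [DecidableEq ι] {R : Type*} [CommRing R]

lemma detG_erase (w : ι → R) (k : ι) :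
    (Matrix.updateRow (Matrix.diagonal w) k (fun _ => 1)).det
      = ∏ j ∈ univ.erase k, w j := by
  have h1 : (fun _ => (1 : R)) = ∑ j : ι, (Pi.single j 1 : ι → R) := by
    funext t
    simp [Pi.single_apply]
  rw [h1]
  have key := (Matrix.detRowAlternating : (ι → R) [⋀^ι]→ₗ[R] R).map_update_sum
    (univ : Finset ι) k (fun j => (Pi.single j 1 : ι → R)) (Matrix.diagonal w)
  rw [show (Matrix.updateRow (Matrix.diagonal w) k (∑ j : ι, (Pi.single j 1 : ι → R))).det
      = (Matrix.detRowAlternating : (ι → R) [⋀^ι]→ₗ[R] R)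
        (Function.update (Matrix.diagonal w) k (∑ j : ι, (Pi.single j 1 : ι → R))) from rfl, key]
  rw [Finset.sum_eq_single k]
  · have e : Matrix.updateRow (Matrix.diagonal w) k (Pi.single k 1 : ι → R)
        = Matrix.diagonal (Function.update w k 1) := by
      ext i j
      by_cases h : i = k
      · subst h; simp [Pi.single_apply, Matrix.diagonal, eq_comm]
      · simp [Function.update_of_ne h, Matrix.diagonal, Pi.single_apply, h,
          Matrix.updateRow_ne h]
    rw [show (Matrix.detRowAlternating : (ι → R) [⋀^ι]→ₗ[R] R)
        (Function.update (Matrix.diagonal w) k (Pi.single k 1 : ι → R))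
        = (Matrix.updateRow (Matrix.diagonal w) k (Pi.single k 1 : ι → R)).det from rfl, e,
      Matrix.det_diagonal, Finset.prod_update_of_mem (Finset.mem_univ k), one_mul,
      Finset.sdiff_singleton_eq_erase]
  · intro j _ hj
    rw [show (Matrix.detRowAlternating : (ι → R) [⋀^ι]→ₗ[R] R)
        (Function.update (Matrix.diagonal w) k (Pi.single j 1 : ι → R))
        = (Matrix.updateRow (Matrix.diagonal w) k (Pi.single j 1 : ι → R)).det from rfl]
    apply Matrix.det_eq_zero_of_column_eq_zero k
    intro i
    by_cases h : i = k
    · subst h; simp [Pi.single_apply, (Ne.symm hj)]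
    · simp [Matrix.updateRow_ne h, Matrix.diagonal, h]
  · simp

lemma det_one_sub_rows (x : ι → R) :
    (Matrix.of fun i j => if i = j then (1 : R) else -x i).det
      = ∏ i, (1 + x i) - ∑ k, x k * ∏ j ∈ univ.erase k, (1 + x j) := by
  classical
  set a : ι → ι → R := fun i => (Pi.single i (1 + x i) : ι → R) with ha
  set b : ι → ι → R := fun i _ => -x i with hb
  have hM : (Matrix.of fun i j => if i = j then (1 : R) else -x i) = Matrix.of (a + b) := by
    ext i j
    by_cases h : i = j
    · subst h; simp [ha, hb, Pi.single_apply]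
    · simp [ha, hb, Pi.single_apply, h, Ne.symm h]
  rw [hM]
  have step2 : (Matrix.of (a + b)).det
      = ∑ s : Finset ι, (Matrix.detRowAlternating : (ι → R) [⋀^ι]→ₗ[R] R) (s.piecewise a b) :=
    (Matrix.detRowAlternating : (ι → R) [⋀^ι]→ₗ[R] R).toMultilinearMap.map_add_univ a b
  rw [step2]
  -- step 3 : each term
  have step3 : ∀ s : Finset ι,
      (Matrix.detRowAlternating : (ι → R) [⋀^ι]→ₗ[R] R) (s.piecewise a b)
        = (∏ i ∈ sᶜ, (-x i)) *
          (Matrix.of fun i j => if i ∈ s then a i j else 1).det := by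
    intro s
    have hv : s.piecewise a b
        = fun i j => (if i ∈ s then (1:R) else -x i) *
            (Matrix.of fun i j => if i ∈ s then a i j else 1) i j := by
      funext i j
      by_cases h : i ∈ s
      · simp [Finset.piecewise_eq_of_mem _ _ _ h, h]
      · simp [Finset.piecewise_eq_of_notMem _ _ _ h, h, hb]
    have : (Matrix.detRowAlternating : (ι → R) [⋀^ι]→ₗ[R] R) (s.piecewise a b)
        = (Matrix.of fun i j => (if i ∈ s then (1:R) else -x i) *
            (Matrix.of fun i j => if i ∈ s then a i j else 1) i j).det := by
      rw [hv]; rfl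
    rw [this, Matrix.det_mul_column]
    congr 1
    rw [← Finset.prod_filter_mul_prod_filter_not univ (· ∈ s), Finset.filter_mem_eq_inter,
      Finset.univ_inter, Finset.filter_not, Finset.filter_mem_eq_inter, Finset.univ_inter,
      ← Finset.compl_eq_univ_sdiff]
    rw [Finset.prod_eq_one (fun i hi => if_pos hi), one_mul]
    exact Finset.prod_congr rfl (fun i hi => if_neg (Finset.mem_compl.mp hi))
  simp only [step3]
  -- define G
  set G : Finset ι → R := fun s => (Matrix.of fun i j => if i ∈ s then a i j else 1).det with hG
  -- G for small complements
  have hGuniv : G univ = ∏ i, (1 + x i) := by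
    have : (Matrix.of fun i j => if i ∈ (univ : Finset ι) then a i j else 1)
        = Matrix.diagonal (fun i => 1 + x i) := by
      ext i j
      simp [ha, Pi.single_apply, Matrix.diagonal, eq_comm]
    rw [hG]; simp only [this, Matrix.det_diagonal]
  have hGerase : ∀ k : ι, G (univ.erase k) = ∏ j ∈ univ.erase k, (1 + x j) := by
    intro k
    have : (Matrix.of fun i j => if i ∈ univ.erase k then a i j else 1)
        = Matrix.updateRow (Matrix.diagonal (fun i => 1 + x i)) k (fun _ => 1) := by
      ext i j
      by_cases h : i = k
      · subst h; simp
      · simp [Finset.mem_erase, h, Ne.symm h, ha, Pi.single_apply, Matrix.updateRow_ne h,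
          Matrix.diagonal, eq_comm]
    rw [hG]; simp only [this, detG_erase]
  have hGzero : ∀ s : Finset ι, 1 < sᶜ.card → G s = 0 := by
    intro s hs
    obtain ⟨i, hi, j, hj, hij⟩ := Finset.one_lt_card.mp hs
    rw [Finset.mem_compl] at hi hj
    apply Matrix.det_zero_of_row_eq hij
    funext t
    simp [hi, hj]
  -- now the sum
  have hsplit : (Finset.univ : Finset (Finset ι))
      = insert univ (Finset.image (fun k => univ.erase k) univ) ∪
        Finset.filter (fun s => 1 < sᶜ.card) univ := by
    ext s
    simp only [Finset.mem_univ, true_iff, Finset.mem_union, Finset.mem_insert,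
      Finset.mem_image, Finset.mem_filter]
    by_cases h : 1 < sᶜ.card
    · tauto
    · left
      interval_cases h' : sᶜ.card
      · left
        have : sᶜ = ∅ := Finset.card_eq_zero.mp h'
        have := congrArg (·ᶜ) this
        simpa using this
      · right
        obtain ⟨k, hk⟩ := Finset.card_eq_one.mp h'
        refine ⟨k, by simp, ?_⟩
        rw [← Finset.compl_singleton, ← hk, compl_compl]
  -- restrict the sum to the surviving subsets
  set A : Finset (Finset ι) :=
    insert univ (Finset.image (fun k => univ.erase k) univ) with hA
  have hsub : ∑ s : Finset ι, (∏ i ∈ sᶜ, (-x i)) * G s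
      = ∑ s ∈ A, (∏ i ∈ sᶜ, (-x i)) * G s := by
    refine (Finset.sum_subset (Finset.subset_univ A) ?_).symm
    intro s _ hs
    have h2 : 1 < sᶜ.card := by
      have := hsplit ▸ Finset.mem_univ s
      rw [Finset.mem_union] at this
      rcases this with h | h
      · exact absurd h hs
      · exact (Finset.mem_filter.mp h).2
    rw [hGzero s h2, mul_zero]
  rw [hsub, hA]
  have hnotmem : (univ : Finset ι) ∉ Finset.image (fun k => univ.erase k) univ := by
    simp only [Finset.mem_image]
    rintro ⟨k, -, hk⟩
    have : k ∈ univ.erase k := by rw [hk]; exact Finset.mem_univ k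
    exact Finset.notMem_erase k univ this
  rw [Finset.sum_insert hnotmem, Finset.compl_univ, Finset.prod_empty, one_mul, hGuniv,
    Finset.sum_image (fun k _ k' _ h => by
      by_contra hne
      have hmem : k ∈ univ.erase k := by
        rw [h]; exact Finset.mem_erase.mpr ⟨hne, Finset.mem_univ k⟩
      exact Finset.notMem_erase k univ hmem)]
  have : ∀ k : ι, (∏ i ∈ (univ.erase k)ᶜ, (-x i)) * G (univ.erase k)
      = -(x k * ∏ j ∈ univ.erase k, (1 + x j)) := by
    intro k
    rw [hGerase k, Finset.compl_erase, Finset.compl_univ, Finset.prod_insert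
      (Finset.notMem_empty k), Finset.prod_empty, mul_one, neg_mul]
  rw [Finset.sum_congr rfl (fun k _ => this k), Finset.sum_neg_distrib, ← sub_eq_add_neg]

lemma prod_one_add_X :
    ∏ i : ι, ((1 : MvPolynomial ι ℤ) + X i)
      = ∑ j ∈ range (Fintype.card ι + 1), esymm ι ℤ j := by
  simp_rw [add_comm (1 : MvPolynomial ι ℤ)]
  rw [Fintype.prod_add]
  simp only [Finset.prod_const_one, mul_one]
  rw [show (Finset.univ : Finset (Finset ι)) = (Finset.univ : Finset ι).powerset from
    Finset.powerset_univ.symm, Finset.sum_powerset]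
  rw [Finset.card_univ]
  rfl

lemma sum_X_mul_prod_one_add_X :
    ∑ k : ι, X k * ∏ j ∈ univ.erase k, ((1 : MvPolynomial ι ℤ) + X j)
      = ∑ j ∈ range (Fintype.card ι + 1), (j : ℕ) • esymm ι ℤ j := by
  have step1 : ∀ k : ι, X k * ∏ j ∈ univ.erase k, ((1 : MvPolynomial ι ℤ) + X j)
      = ∑ t ∈ (univ.erase k).powerset, ∏ i ∈ insert k t, X i := by
    intro k
    simp_rw [add_comm (1 : MvPolynomial ι ℤ)]
    rw [Finset.prod_add]
    simp only [Finset.prod_const_one, mul_one, Finset.mul_sum]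
    refine Finset.sum_congr rfl fun t ht => ?_
    rw [Finset.mem_powerset] at ht
    have hk : k ∉ t := fun hkt => Finset.notMem_erase k univ (ht hkt)
    rw [Finset.prod_insert hk]
  simp_rw [step1]
  have step2 : ∀ k : ι, ∑ t ∈ (univ.erase k).powerset, ∏ i ∈ insert k t, X i
      = ∑ T ∈ univ.powerset.filter (fun T => k ∈ T), ∏ i ∈ T, (X i : MvPolynomial ι ℤ) := by
    intro k
    refine Finset.sum_nbij' (fun t => insert k t) (fun T => T.erase k) ?_ ?_ ?_ ?_ ?_
    · intro t ht
      rw [Finset.mem_powerset] at ht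
      exact Finset.mem_filter.mpr ⟨Finset.mem_powerset.mpr (Finset.subset_univ _),
        Finset.mem_insert_self k t⟩
    · intro T hT
      rw [Finset.mem_filter] at hT
      exact Finset.mem_powerset.mpr (Finset.erase_subset_erase k (Finset.subset_univ T))
    · intro t ht
      rw [Finset.mem_powerset] at ht
      exact Finset.erase_insert (fun hkt => Finset.notMem_erase k univ (ht hkt))
    · intro T hT
      rw [Finset.mem_filter] at hT
      exact Finset.insert_erase hT.2
    · intro t ht
      rfl
  simp_rw [step2, Finset.sum_filter]
  rw [Finset.sum_comm]
  have step3 : ∀ T : Finset ι,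
      (∑ k : ι, if k ∈ T then ∏ i ∈ T, (X i : MvPolynomial ι ℤ) else 0)
        = T.card • ∏ i ∈ T, (X i : MvPolynomial ι ℤ) := by
    intro T
    rw [Finset.sum_ite_mem, Finset.univ_inter, Finset.sum_const]
  rw [Finset.sum_congr rfl fun T _ => step3 T]
  rw [show (Finset.univ : Finset ι).powerset = (Finset.univ : Finset ι).powerset from rfl,
    Finset.sum_powerset, Finset.card_univ]
  refine Finset.sum_congr rfl fun j hj => ?_
  rw [esymm, Finset.smul_sum]
  refine Finset.sum_congr rfl fun T hT => ?_
  rw [(Finset.mem_powersetCard.mp hT).2]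

end Aux

/-- The determinant of the `S × S` matrix `M` with `M_{ii} = 1` and `M_{ij} = -x_i` for
`i ≠ j` (i.e. the matrix `I - V·A` of the TMNE system, where `V = diag(x_1, …, x_S)` and
`A` has zero diagonal and off-diagonal entries `1`) equals
`1 - σ_2 - 2 σ_3 - ⋯ - (S-1) σ_S`, where `σ_j` is the `j`-th elementary symmetric
polynomial in `x_1, …, x_S`. -/
theorem det_tmne_matrix (S : ℕ) (hS : 1 ≤ S) :
    (Matrix.of fun i j : Fin S =>
        if i = j then (1 : MvPolynomial (Fin S) ℤ) else -MvPolynomial.X i).det =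
      1 - ∑ j ∈ Finset.Icc 2 S,
        MvPolynomial.C ((j : ℤ) - 1) * MvPolynomial.esymm (Fin S) ℤ j := by
  rw [det_one_sub_rows, prod_one_add_X, sum_X_mul_prod_one_add_X, Fintype.card_fin,
    ← Finset.sum_sub_distrib]
  have hr : Finset.range (S + 1) = insert 0 (insert 1 (Finset.Icc 2 S)) := by
    ext j
    simp only [Finset.mem_range, Finset.mem_insert, Finset.mem_Icc, Nat.lt_succ_iff]
    omega
  have hterm : ∀ j : ℕ, esymm (Fin S) ℤ j - j • esymm (Fin S) ℤ j
      = -(MvPolynomial.C ((j : ℤ) - 1) * esymm (Fin S) ℤ j) := by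
    intro j
    rw [← MvPolynomial.smul_eq_C_mul, sub_smul, one_smul, neg_sub, natCast_zsmul]
  rw [hr, Finset.sum_insert (by simp), Finset.sum_insert (by simp)]
  simp only [esymm_zero, esymm_one, zero_smul, one_smul, sub_zero, sub_self, zero_add]
  rw [Finset.sum_congr rfl fun j _ => hterm j, Finset.sum_neg_distrib, ← sub_eq_add_neg]
end

section
/- (Generating function for the m-Bézout number of the TMNE system.) Let S ≥ 1 and let σ_j denote the j-th elementary symmetric polynomial in x_1,…,x_S. The polynomial 1 − σ_2 − 2σ_3 − ⋯ − (S−1)σ_S has constant coefficient 1, hence is invertible in the ring of multivariate formal power series in x_1,…,x_S over ℤ. Then the coefficient of the monomial x_1·x_2⋯x_S (all exponents equal to 1) in the power series inverse of 1 − ∑_{j=2}^{S}(j−1)σ_j equals the coefficient of x_1·x_2⋯x_S in the polynomial ∏_{j=1}^{S} (∑_{k≠j} x_k), i.e. equals the m-Bézout number of the totally mixed Nash equilibrium system for S players with two strategies each. -/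
open MvPolynomial Finset

namespace TMNEAux
variable {S : ℕ}

noncomputable def ind (T : Finset (Fin S)) : Fin S →₀ ℕ := ∑ i ∈ T, Finsupp.single i 1

lemma ind_apply (T : Finset (Fin S)) (j : Fin S) : ind T j = if j ∈ T then 1 else 0 := by
  classical
  simp [ind, Finset.sum_apply', Finsupp.single_apply]

lemma ind_support (T : Finset (Fin S)) : (ind T).support = T := by
  ext j; simp [Finsupp.mem_support_iff, ind_apply]

def SqF (e : Fin S →₀ ℕ) : Prop := ∀ i, e i ≤ 1

lemma sqf_ind (T : Finset (Fin S)) : SqF (ind T) := by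
  intro i; rw [ind_apply]; split <;> simp

lemma sqf_eq_ind {e : Fin S →₀ ℕ} (he : SqF e) : e = ind e.support := by
  ext j
  rw [ind_apply]
  by_cases h : j ∈ e.support
  · have h1 := Finsupp.mem_support_iff.mp h
    have h2 := he j
    simp only [h, if_true]
    omega
  · simp only [h, if_false]
    exact Finsupp.notMem_support_iff.mp h

lemma prod_X_T (T : Finset (Fin S)) :
    (∏ i ∈ T, X i : MvPolynomial (Fin S) ℤ) = monomial (ind T) 1 := by
  rw [← prod_X_pow_eq_monomial, ind_support]
  exact Finset.prod_congr rfl fun i hi => by rw [ind_apply, if_pos hi, pow_one]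

lemma coeff_prod_X_T (e : Fin S →₀ ℕ) (T : Finset (Fin S)) :
    coeff e (∏ i ∈ T, X i : MvPolynomial (Fin S) ℤ) = if ind T = e then 1 else 0 := by
  rw [prod_X_T, coeff_monomial]

lemma ind_eq_iff {e : Fin S →₀ ℕ} (he : SqF e) (T : Finset (Fin S)) :
    ind T = e ↔ T = e.support := by
  constructor
  · intro h; rw [← h, ind_support]
  · rintro rfl; exact (sqf_eq_ind he).symm

lemma ind_erase {U : Finset (Fin S)} {i : Fin S} (hi : i ∈ U) :
    ind U - Finsupp.single i 1 = ind (U.erase i) := by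
  ext j
  rw [Finsupp.tsub_apply, ind_apply, ind_apply, Finsupp.single_apply]
  rcases eq_or_ne i j with rfl | h
  · simp [hi]
  · simp [h, Ne.symm h, mem_erase]

lemma ind_sdiff (T : Finset (Fin S)) :
    ind (univ : Finset (Fin S)) - ind T = ind (univ \ T) := by
  ext j
  rw [Finsupp.tsub_apply, ind_apply, ind_apply, ind_apply]
  by_cases h : j ∈ T <;> simp [h]

/-- `s1` is the first elementary symmetric polynomial. -/
noncomputable def s1 : MvPolynomial (Fin S) ℤ := ∑ i : Fin S, X i

lemma coeff_s1_pow (m : ℕ) (U : Finset (Fin S)) :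
    coeff (ind U) ((∑ i : Fin S, X i : MvPolynomial (Fin S) ℤ) ^ m) =
      if U.card = m then (m.factorial : ℤ) else 0 := by
  induction m generalizing U with
  | zero =>
    rw [pow_zero, coeff_one]
    by_cases h : U = ∅
    · subst h; simp [ind]
    · rw [if_neg, if_neg]
      · simpa [Finset.card_eq_zero] using h
      · intro h0
        apply h
        rw [← ind_support U, ← h0]
        simp
  | succ m ih =>
    rw [pow_succ, Finset.mul_sum, coeff_sum]
    simp only [coeff_mul_X', ind_support]
    rw [Finset.sum_ite_mem, Finset.univ_inter]
    have key : ∀ i ∈ U, coeff (ind U - Finsupp.single i 1)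
        ((∑ i : Fin S, X i : MvPolynomial (Fin S) ℤ) ^ m) =
        if U.card = m + 1 then (m.factorial : ℤ) else 0 := by
      intro i hi
      have hc : U.card ≠ 0 := Finset.card_ne_zero_of_mem hi
      rw [ind_erase hi, ih, Finset.card_erase_of_mem hi]
      by_cases h : U.card = m + 1
      · rw [if_pos (by omega), if_pos h]
      · rw [if_neg (by omega), if_neg h]
    rw [Finset.sum_congr rfl key, Finset.sum_const, nsmul_eq_mul]
    by_cases h : U.card = m + 1
    · rw [if_pos h, if_pos h, h, Nat.factorial_succ]
      push_cast; ring
    · rw [if_neg h, if_neg h, mul_zero]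

/-- squarefree coefficients of the elementary symmetric polynomials -/
lemma coeff_esymm {e : Fin S →₀ ℕ} (he : SqF e) (j : ℕ) :
    coeff e (esymm (Fin S) ℤ j) = if e.support.card = j then 1 else 0 := by
  rw [esymm, coeff_sum]
  simp only [coeff_prod_X_T]
  have : ∀ T ∈ powersetCard j (univ : Finset (Fin S)),
      (if ind T = e then (1:ℤ) else 0) = if T = e.support then 1 else 0 := by
    intro T _
    exact if_congr (ind_eq_iff he T) rfl rfl
  rw [Finset.sum_congr rfl this]
  simp only [Finset.sum_ite_eq', Finset.mem_powersetCard_univ]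

lemma s1_def : (s1 : MvPolynomial (Fin S) ℤ) = ∑ i : Fin S, X i := rfl

noncomputable def phi : MvPolynomial (Fin S) ℤ :=
  1 - ∑ j ∈ Finset.Icc 2 S, C ((j : ℤ) - 1) * esymm (Fin S) ℤ j

noncomputable def E : MvPolynomial (Fin S) ℤ := ∏ i : Fin S, (X i + 1)

noncomputable def F : MvPolynomial (Fin S) ℤ := ∏ i : Fin S, (1 - X i)

lemma card_support_le {e : Fin S →₀ ℕ} : e.support.card ≤ S := by
  simpa using Finset.card_le_univ e.support

/-- squarefree coefficients of `phi` -/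
lemma coeff_phi {e : Fin S →₀ ℕ} (he : SqF e) :
    coeff e (phi : MvPolynomial (Fin S) ℤ) = 1 - (e.support.card : ℤ) := by
  rw [phi, coeff_sub, coeff_sum, coeff_one]
  have h1 : ∀ j ∈ Finset.Icc 2 S,
      coeff e (C ((j : ℤ) - 1) * esymm (Fin S) ℤ j) =
      if e.support.card = j then (j : ℤ) - 1 else 0 := by
    intro j _
    rw [coeff_C_mul, coeff_esymm he]
    split <;> simp
  rw [Finset.sum_congr rfl h1, Finset.sum_ite_eq (Finset.Icc 2 S) e.support.card]
  by_cases h0 : e.support.card = 0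
  · have : e = 0 := by
      rw [sqf_eq_ind he, Finset.card_eq_zero.mp h0]
      simp [ind]
    rw [if_pos this.symm, if_neg, h0]
    · simp
    · simp [h0]
  · have he0 : e ≠ 0 := fun h => h0 (by simp [h])
    rw [if_neg (fun h => he0 h.symm)]
    by_cases h2 : e.support.card ∈ Finset.Icc 2 S
    · rw [if_pos h2]
      ring
    · have : e.support.card = 1 := by
        have := card_support_le (e := e)
        simp only [Finset.mem_Icc] at h2
        omega
      rw [if_neg h2, this]
      simp

/-- squarefree coefficients of `E` -/
lemma coeff_E {e : Fin S →₀ ℕ} (he : SqF e) : coeff e (E : MvPolynomial (Fin S) ℤ) = 1 := by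
  rw [E, Finset.prod_add, coeff_sum]
  have h1 : ∀ T ∈ (univ : Finset (Fin S)).powerset,
      coeff e ((∏ i ∈ T, X i) * ∏ _i ∈ univ \ T, (1 : MvPolynomial (Fin S) ℤ)) =
      if T = e.support then 1 else 0 := by
    intro T _
    rw [Finset.prod_const_one, mul_one, coeff_prod_X_T]
    exact if_congr (ind_eq_iff he T) rfl rfl
  rw [Finset.sum_congr rfl h1]
  simp only [Finset.sum_ite_eq', Finset.mem_powerset, Finset.subset_univ, if_true]

lemma sqf_sub {e : Fin S →₀ ℕ} (he : SqF e) (t : Fin S →₀ ℕ) : SqF (e - t) := by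
  intro i
  rw [Finsupp.tsub_apply]
  exact le_trans (Nat.sub_le _ _) (he i)

/-- squarefree coefficients of `s1 * E` -/
lemma coeff_s1_mul_E {e : Fin S →₀ ℕ} (he : SqF e) :
    coeff e ((s1 * E : MvPolynomial (Fin S) ℤ)) = (e.support.card : ℤ) := by
  rw [mul_comm, s1_def, Finset.mul_sum, coeff_sum]
  simp only [coeff_mul_X']
  rw [Finset.sum_ite_mem, Finset.univ_inter]
  have h1 : ∀ i ∈ e.support, coeff (e - Finsupp.single i 1) (E : MvPolynomial (Fin S) ℤ) = 1 :=
    fun i _ => coeff_E (sqf_sub he _)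
  rw [Finset.sum_congr rfl h1, Finset.sum_const, nsmul_eq_mul, mul_one]

/-- the key squarefree-coefficient predicate: `Ksq p` iff all squarefree coefficients vanish -/
def Ksq (p : MvPolynomial (Fin S) ℤ) : Prop := ∀ e : Fin S →₀ ℕ, SqF e → coeff e p = 0

lemma Ksq_mul_right {p : MvPolynomial (Fin S) ℤ} (hp : Ksq p) (q : MvPolynomial (Fin S) ℤ) :
    Ksq (p * q) := by
  intro e he
  classical
  rw [MvPolynomial.coeff_mul]
  refine Finset.sum_eq_zero fun x hx => ?_
  rw [Finset.HasAntidiagonal.mem_antidiagonal] at hx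
  have h1 : SqF x.1 := by
    intro i
    have : x.1 i + x.2 i = e i := by rw [← Finsupp.add_apply, hx]
    have := he i
    omega
  rw [hp x.1 h1, zero_mul]

lemma Ksq_add {p q : MvPolynomial (Fin S) ℤ} (hp : Ksq p) (hq : Ksq q) : Ksq (p + q) := by
  intro e he; rw [coeff_add, hp e he, hq e he, add_zero]

lemma Ksq_sub {p q : MvPolynomial (Fin S) ℤ} (hp : Ksq p) (hq : Ksq q) : Ksq (p - q) := by
  intro e he; rw [coeff_sub, hp e he, hq e he, sub_zero]

/-- `s1 ^ (S+1)` has vanishing squarefree coefficients (degree reasons) -/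
lemma Ksq_s1_pow : Ksq ((s1 : MvPolynomial (Fin S) ℤ) ^ (S + 1)) := by
  intro e he
  have h1 : IsHomogeneous (s1 : MvPolynomial (Fin S) ℤ) 1 := by
    rw [s1_def]
    exact IsHomogeneous.sum _ _ _ fun i _ => isHomogeneous_X _ _
  have h2 : IsHomogeneous ((s1 : MvPolynomial (Fin S) ℤ) ^ (S + 1)) (S + 1) := by
    simpa using h1.pow (S + 1)
  apply h2.coeff_eq_zero
  have : e.degree ≤ e.support.card := by
    rw [Finsupp.degree]
    calc ∑ i ∈ e.support, e i ≤ ∑ _i ∈ e.support, 1 := Finset.sum_le_sum fun i _ => he i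
    _ = e.support.card := by simp
  have := card_support_le (e := e)
  omega

lemma Ksq_EF : Ksq ((E * F : MvPolynomial (Fin S) ℤ) - 1) := by
  intro e he
  rw [coeff_sub]
  have hEF : (E * F : MvPolynomial (Fin S) ℤ) = ∏ i : Fin S, (-(X i * X i) + 1) := by
    rw [E, F, ← Finset.prod_mul_distrib]
    exact Finset.prod_congr rfl fun i _ => by ring
  have hz : ∀ T ∈ (univ : Finset (Fin S)).powerset, T ≠ ∅ →
      coeff e ((∏ i ∈ T, -(X i * X i)) * ∏ _i ∈ univ \ T, (1 : MvPolynomial (Fin S) ℤ)) = 0 := by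
    intro T _ hT
    obtain ⟨i, hi⟩ := Finset.nonempty_iff_ne_empty.mpr hT
    rw [← Finset.mul_prod_erase T _ hi]
    have hre : (-(X i * X i) * ∏ j ∈ T.erase i, -(X j * X j)) *
          ∏ _j ∈ univ \ T, (1 : MvPolynomial (Fin S) ℤ)
        = (X i * X i) * (-((∏ j ∈ T.erase i, -(X j * X j)) *
          ∏ _j ∈ univ \ T, (1 : MvPolynomial (Fin S) ℤ))) := by ring
    rw [hre]
    have hX : Ksq ((X i * X i : MvPolynomial (Fin S) ℤ)) := by
      intro f hf
      rw [← pow_two, X_pow_eq_monomial, coeff_monomial]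
      rw [if_neg]
      intro h
      have h2 : f i = 2 := by rw [← h]; simp
      have := hf i
      omega
    exact Ksq_mul_right hX _ e he
  rw [hEF, Finset.prod_add, coeff_sum,
    Finset.sum_eq_single_of_mem ∅ (Finset.empty_mem_powerset _) hz]
  simp

noncomputable def Geo : MvPolynomial (Fin S) ℤ := ∑ n ∈ Finset.range (S + 1), s1 ^ n

noncomputable def G : MvPolynomial (Fin S) ℤ := Geo * F

lemma Ksq_phi_sub : Ksq ((phi : MvPolynomial (Fin S) ℤ) - (1 - s1) * E) := by
  intro e he
  rw [coeff_sub, coeff_phi he, sub_mul, one_mul, coeff_sub, coeff_E he, coeff_s1_mul_E he]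
  ring

lemma Ksq_phiG : Ksq ((phi * G : MvPolynomial (Fin S) ℤ) - 1) := by
  have hgeo : ((1 : MvPolynomial (Fin S) ℤ) - s1) * Geo = 1 - s1 ^ (S + 1) := by
    have h := geom_sum_mul (s1 : MvPolynomial (Fin S) ℤ) (S + 1)
    rw [Geo]
    linear_combination -h
  have hdec : (phi * G : MvPolynomial (Fin S) ℤ) - 1 =
      ((phi : MvPolynomial (Fin S) ℤ) - (1 - s1) * E) * G + (E * F - 1)
        - s1 ^ (S + 1) * (E * F) := by
    rw [G]
    linear_combination (E * F : MvPolynomial (Fin S) ℤ) * hgeo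
  rw [hdec]
  exact Ksq_sub (Ksq_add (Ksq_mul_right Ksq_phi_sub G) Ksq_EF)
    (Ksq_mul_right Ksq_s1_pow _)

lemma prod_neg_X (T : Finset (Fin S)) :
    (∏ i ∈ T, (-X i) : MvPolynomial (Fin S) ℤ) = C ((-1) ^ T.card) * ∏ i ∈ T, X i := by
  have h : ∀ i ∈ T, (-X i : MvPolynomial (Fin S) ℤ) = (-1) * X i := fun i _ => by ring
  rw [Finset.prod_congr rfl h, Finset.prod_mul_distrib, Finset.prod_const]
  congr 1
  rw [map_pow, map_neg, map_one]

lemma ind_T_le : ∀ T : Finset (Fin S), ind T ≤ ind (univ : Finset (Fin S)) := by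
  intro T
  rw [Finsupp.le_def]
  intro i
  rw [ind_apply, ind_apply]
  split <;> simp

lemma coeff_top_s1pow_mul (n : ℕ) (T : Finset (Fin S)) :
    coeff (ind univ) ((s1 ^ n : MvPolynomial (Fin S) ℤ) * ∏ i ∈ T, X i) =
      if (univ \ T).card = n then (n.factorial : ℤ) else 0 := by
  rw [prod_X_T, coeff_mul_monomial', if_pos (ind_T_le T), ind_sdiff, mul_one, s1_def,
    coeff_s1_pow]

lemma sdiff_card_mem : ∀ T : Finset (Fin S), (univ \ T).card ∈ Finset.range (S + 1) := by
  intro T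
  rw [Finset.mem_range]
  have : (univ \ T).card ≤ (univ : Finset (Fin S)).card := Finset.card_le_univ _
  simp only [Finset.card_univ, Fintype.card_fin] at this
  omega

lemma coeff_G : coeff (ind univ) (G : MvPolynomial (Fin S) ℤ) =
    ∑ T ∈ (univ : Finset (Fin S)).powerset,
      (-1) ^ T.card * (((univ \ T).card.factorial : ℤ)) := by
  have hF : (F : MvPolynomial (Fin S) ℤ) = ∑ T ∈ (univ : Finset (Fin S)).powerset,
      C ((-1) ^ T.card) * ∏ i ∈ T, X i := by
    rw [F]
    have h : ∀ i ∈ (univ : Finset (Fin S)), (1 - X i : MvPolynomial (Fin S) ℤ) = -X i + 1 :=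
      fun i _ => by ring
    rw [Finset.prod_congr rfl h, Finset.prod_add]
    exact Finset.sum_congr rfl fun T _ => by
      rw [Finset.prod_const_one, mul_one, prod_neg_X]
  rw [G, hF, Finset.mul_sum, coeff_sum]
  refine Finset.sum_congr rfl fun T _ => ?_
  rw [show (Geo : MvPolynomial (Fin S) ℤ) * (C ((-1) ^ T.card) * ∏ i ∈ T, X i) =
    C ((-1) ^ T.card) * (Geo * ∏ i ∈ T, X i) by ring, coeff_C_mul]
  congr 1
  rw [Geo, Finset.sum_mul, coeff_sum]
  have h2 : ∀ n ∈ Finset.range (S + 1),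
      coeff (ind univ) ((s1 ^ n : MvPolynomial (Fin S) ℤ) * ∏ i ∈ T, X i) =
      if (univ \ T).card = n then (n.factorial : ℤ) else 0 :=
    fun n _ => coeff_top_s1pow_mul n T
  rw [Finset.sum_congr rfl h2, Finset.sum_ite_eq, if_pos (sdiff_card_mem T)]

lemma coeff_RHS : coeff (ind univ) (∏ j : Fin S, (s1 - X j) : MvPolynomial (Fin S) ℤ) =
    ∑ T ∈ (univ : Finset (Fin S)).powerset,
      (-1) ^ T.card * (((univ \ T).card.factorial : ℤ)) := by
  have h : ∀ j ∈ (univ : Finset (Fin S)), (s1 - X j : MvPolynomial (Fin S) ℤ) = -X j + s1 :=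
    fun j _ => by ring
  rw [Finset.prod_congr rfl h, Finset.prod_add, coeff_sum]
  refine Finset.sum_congr rfl fun T _ => ?_
  rw [prod_neg_X, Finset.prod_const,
    show (C ((-1) ^ T.card) * ∏ i ∈ T, X i) * s1 ^ (univ \ T).card =
      C ((-1) ^ T.card) * (s1 ^ (univ \ T).card * ∏ i ∈ T, X i) by ring,
    coeff_C_mul, coeff_top_s1pow_mul, if_pos rfl]

end TMNEAux

open TMNEAux

/-- **Generating function for the m-Bézout number of the TMNE system.**
The polynomial `1 - σ_2 - 2σ_3 - ⋯ - (S-1)σ_S` has constant coefficient `1`, hence is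
invertible as a multivariate formal power series (its inverse being
`MvPowerSeries.invOfUnit _ 1`).  The coefficient of `x_1 x_2 ⋯ x_S` in this power series
inverse equals the coefficient of `x_1 x_2 ⋯ x_S` in `∏_{j=1}^{S} (∑_{k ≠ j} x_k)`,
the m-Bézout number of the TMNE system for `S` players with two strategies each. -/
theorem tmne_mBezout_generating_function (S : ℕ) (hS : 1 ≤ S) :
    MvPowerSeries.coeff (Finsupp.equivFunOnFinite.symm fun _ : Fin S => 1)
      (MvPowerSeries.invOfUnit
        (((1 - ∑ j ∈ Finset.Icc 2 S,
            MvPolynomial.C ((j : ℤ) - 1) * MvPolynomial.esymm (Fin S) ℤ j :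
          MvPolynomial (Fin S) ℤ) : MvPowerSeries (Fin S) ℤ)) 1) =
    MvPolynomial.coeff (Finsupp.equivFunOnFinite.symm fun _ : Fin S => 1)
      (∏ j : Fin S, ∑ k ∈ Finset.univ.erase j, (MvPolynomial.X k : MvPolynomial (Fin S) ℤ)) := by
  classical
  set d : Fin S →₀ ℕ := Finsupp.equivFunOnFinite.symm fun _ : Fin S => 1 with hd
  have hdi : ∀ i, d i = 1 := fun i => rfl
  have hdind : d = ind (univ : Finset (Fin S)) := by
    ext i
    rw [ind_apply, hdi i, if_pos (Finset.mem_univ i)]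
  have hphi : (1 - ∑ j ∈ Finset.Icc 2 S, C ((j : ℤ) - 1) * esymm (Fin S) ℤ j :
      MvPolynomial (Fin S) ℤ) = phi := rfl
  rw [hphi]
  set A : MvPowerSeries (Fin S) ℤ :=
    MvPowerSeries.invOfUnit ((phi : MvPolynomial (Fin S) ℤ) : MvPowerSeries (Fin S) ℤ) 1 with hA
  have hc : MvPowerSeries.constantCoeff
      ((phi : MvPolynomial (Fin S) ℤ) : MvPowerSeries (Fin S) ℤ) = 1 := by
    rw [← MvPowerSeries.coeff_zero_eq_constantCoeff_apply, MvPolynomial.coeff_coe,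
      coeff_phi (fun i => by simp : SqF (0 : Fin S →₀ ℕ))]
    simp
  have hmul : ((phi : MvPolynomial (Fin S) ℤ) : MvPowerSeries (Fin S) ℤ) * A = 1 :=
    MvPowerSeries.mul_invOfUnit _ 1 (by rw [hc]; rfl)
  have h1 : ((G : MvPolynomial (Fin S) ℤ) : MvPowerSeries (Fin S) ℤ)
      = ((phi * G - 1 : MvPolynomial (Fin S) ℤ) : MvPowerSeries (Fin S) ℤ) * A + A := by
    have e1 : ((phi * G - 1 : MvPolynomial (Fin S) ℤ) : MvPowerSeries (Fin S) ℤ)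
        = ((phi * G : MvPolynomial (Fin S) ℤ) : MvPowerSeries (Fin S) ℤ) - 1 := by
      have := map_sub (MvPolynomial.coeToMvPowerSeries.ringHom (σ := Fin S) (R := ℤ))
        (phi * G) 1
      simpa using this
    have e2 : ((phi : MvPolynomial (Fin S) ℤ) : MvPowerSeries (Fin S) ℤ) *
        ((G : MvPolynomial (Fin S) ℤ) : MvPowerSeries (Fin S) ℤ) * A
        = ((G : MvPolynomial (Fin S) ℤ) : MvPowerSeries (Fin S) ℤ) := by
      rw [mul_comm ((phi : MvPolynomial (Fin S) ℤ) : MvPowerSeries (Fin S) ℤ), mul_assoc,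
        hmul, mul_one]
    calc ((G : MvPolynomial (Fin S) ℤ) : MvPowerSeries (Fin S) ℤ)
        = ((phi : MvPolynomial (Fin S) ℤ) : MvPowerSeries (Fin S) ℤ) *
          ((G : MvPolynomial (Fin S) ℤ) : MvPowerSeries (Fin S) ℤ) * A := e2.symm
      _ = ((phi * G : MvPolynomial (Fin S) ℤ) : MvPowerSeries (Fin S) ℤ) * A := by
          rw [MvPolynomial.coe_mul]
      _ = (((phi * G - 1 : MvPolynomial (Fin S) ℤ) : MvPowerSeries (Fin S) ℤ) + 1) * A := by
          rw [e1]; ring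
      _ = ((phi * G - 1 : MvPolynomial (Fin S) ℤ) : MvPowerSeries (Fin S) ℤ) * A + A := by
          ring
  have h2 : MvPowerSeries.coeff d
      (((phi * G - 1 : MvPolynomial (Fin S) ℤ) : MvPowerSeries (Fin S) ℤ) * A) = 0 := by
    rw [MvPowerSeries.coeff_mul]
    refine Finset.sum_eq_zero fun x hx => ?_
    rw [Finset.HasAntidiagonal.mem_antidiagonal] at hx
    have hsq : SqF x.1 := by
      intro i
      have hxi : x.1 i + x.2 i = d i := by rw [← Finsupp.add_apply, hx]
      have := hdi i
      omega
    rw [MvPolynomial.coeff_coe, Ksq_phiG x.1 hsq, zero_mul]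
  have h3 := congrArg (MvPowerSeries.coeff d) h1
  rw [map_add, h2, zero_add, MvPolynomial.coeff_coe] at h3
  rw [← h3]
  have h4 : (∏ j : Fin S, ∑ k ∈ Finset.univ.erase j, (X k : MvPolynomial (Fin S) ℤ))
      = ∏ j : Fin S, (s1 - X j) := by
    refine Finset.prod_congr rfl fun j _ => ?_
    have h5 := Finset.add_sum_erase (univ : Finset (Fin S)) (fun k => (X k : MvPolynomial (Fin S) ℤ)) (Finset.mem_univ j)
    rw [s1_def]
    linear_combination h5
  rw [h4, hdind, coeff_G, coeff_RHS]
end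

section
/- (Permanent formula for the m-Bézout coefficient.) Let S ≥ 1, let n_1,…,n_S be natural numbers with N = n_1 + ⋯ + n_S, and let a_{is} (1 ≤ i ≤ N, 1 ≤ s ≤ S) be elements of a commutative ring. Let Â be the N×N matrix obtained from the N×S matrix (a_{is}) by repeating its s-th column n_s times, for each s = 1,…,S. Then (n_1!⋯n_S!) times the coefficient of the monomial x_1^{n_1}⋯x_S^{n_S} in the product of linear forms ∏_{i=1}^{N}(a_{i1}x_1 + ⋯ + a_{iS}x_S) equals the permanent of Â, where the permanent of an N×N matrix B is defined as ∑_{σ} ∏_{i=1}^{N} B_{i,σ(i)}, the sum ranging over all permutations σ of {1,…,N}. -/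
open MvPolynomial

section Aux

variable {S N : ℕ}

/-- Permutations `σ` with `φ ∘ σ = f` correspond to families of fiberwise bijections. -/
def permFiberEquiv (φ f : Fin N → Fin S) :
    {σ : Equiv.Perm (Fin N) // ∀ i, φ (σ i) = f i} ≃
      (∀ s, {i // f i = s} ≃ {i // φ i = s}) where
  toFun σ s := σ.1.subtypeEquiv fun i => by rw [σ.2 i]
  invFun e := ⟨Equiv.ofFiberEquiv e, fun i => Equiv.ofFiberEquiv_map e i⟩
  left_inv σ := by
    ext i
    simp [Equiv.ofFiberEquiv, Equiv.sigmaFiberEquiv]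
  right_inv e := by
    funext s
    ext ⟨i, hi⟩
    subst hi
    simp [Equiv.ofFiberEquiv, Equiv.sigmaFiberEquiv]

lemma card_perm_comp (φ f : Fin N → Fin S) (n : Fin S → ℕ)
    (hφ : ∀ s, (Finset.univ.filter fun i => φ i = s).card = n s)
    (hf : ∀ s, (Finset.univ.filter fun i => f i = s).card = n s) :
    (Finset.univ.filter fun σ : Equiv.Perm (Fin N) => ∀ i, φ (σ i) = f i).card
      = ∏ s, (n s).factorial := by
  classical
  rw [← Fintype.card_subtype, Fintype.card_congr (permFiberEquiv φ f), Fintype.card_pi]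
  refine Finset.prod_congr rfl fun s _ => ?_
  have hcf : Fintype.card {i // f i = s} = n s := by
    rw [Fintype.card_subtype]; exact hf s
  have hcφ : Fintype.card {i // φ i = s} = n s := by
    rw [Fintype.card_subtype]; exact hφ s
  rw [Fintype.card_equiv (Fintype.equivOfCardEq (hcf.trans hcφ.symm)), hcf]

lemma fiber_card_comp (φ : Fin N → Fin S) (σ : Equiv.Perm (Fin N)) (s : Fin S) :
    (Finset.univ.filter fun i => φ (σ i) = s).card
      = (Finset.univ.filter fun i => φ i = s).card := by
  classical
  rw [← Fintype.card_subtype, ← Fintype.card_subtype]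
  exact Fintype.card_congr (σ.subtypeEquiv fun i => Iff.rfl)

lemma prod_monomial_eq {R : Type*} [CommSemiring R] (d : Fin N → Fin S →₀ ℕ)
    (c : Fin N → R) :
    (∏ i, monomial (d i) (c i) : MvPolynomial (Fin S) R)
      = monomial (∑ i, d i) (∏ i, c i) := by
  calc (∏ i, monomial (d i) (c i) : MvPolynomial (Fin S) R)
      = ∏ i, (C (c i) * monomial (d i) 1) := by simp [C_mul_monomial]
    _ = C (∏ i, c i) * ∏ i, monomial (d i) 1 := by
        rw [Finset.prod_mul_distrib, map_prod]
    _ = monomial (∑ i, d i) (∏ i, c i) := (monomial_sum_index _ _ _).symm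

end Aux

/-- **Permanent formula for the m-Bézout coefficient.**
Let `N = n_1 + ⋯ + n_S` and let `Â` be the `N × N` matrix obtained from the `N × S` matrix
`(a_{is})` by repeating its `s`-th column `n_s` times (encoded by a column-assignment map
`φ : Fin N → Fin S` whose fiber over `s` has cardinality `n_s`, so `Â i j = a i (φ j)`).
Then `n_1! ⋯ n_S!` times the coefficient of `x_1^{n_1} ⋯ x_S^{n_S}` in
`∏_{i=1}^{N} (a_{i1} x_1 + ⋯ + a_{iS} x_S)` equals the permanent
`∑_σ ∏_i Â_{i, σ(i)}` of `Â`. -/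
theorem permanent_mBezout (R : Type*) [CommRing R] (S N : ℕ) (hS : 1 ≤ S)
    (n : Fin S → ℕ) (hN : N = ∑ s, n s) (a : Fin N → Fin S → R)
    (φ : Fin N → Fin S) (hφ : ∀ s, (Finset.univ.filter fun i => φ i = s).card = n s) :
    ((∏ s, (n s).factorial : ℕ) : R) *
      MvPolynomial.coeff (Finsupp.equivFunOnFinite.symm n)
        (∏ i : Fin N, ∑ s : Fin S, MvPolynomial.C (a i s) * MvPolynomial.X s) =
    ∑ σ : Equiv.Perm (Fin N), ∏ i : Fin N, a i (φ (σ i)) := by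
  classical
  set m : Fin S →₀ ℕ := Finsupp.equivFunOnFinite.symm n with hm
  set F : Finset (Fin N → Fin S) :=
    Finset.univ.filter fun f => ∀ s, (Finset.univ.filter fun i => f i = s).card = n s with hF
  have hcond : ∀ f : Fin N → Fin S,
      ((∑ i, Finsupp.single (f i) 1) = m ↔
        ∀ s, (Finset.univ.filter fun i => f i = s).card = n s) := by
    intro f
    rw [Finsupp.ext_iff]
    refine forall_congr' fun s => ?_
    rw [Finset.sum_apply']
    simp only [Finsupp.single_apply]
    have hms : m s = n s := by rw [hm]; rfl
    rw [hms, Finset.card_filter]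
  -- Step 1: the coefficient is the sum over functions with prescribed fiber sizes.
  have h1 : MvPolynomial.coeff m (∏ i : Fin N, ∑ s : Fin S, C (a i s) * X s)
      = ∑ f ∈ F, ∏ i, a i (f i) := by
    rw [Finset.prod_univ_sum, MvPolynomial.coeff_sum]
    have hFeq : F = (Fintype.piFinset fun _ : Fin N => (Finset.univ : Finset (Fin S))).filter
        fun f => (∑ i, Finsupp.single (f i) 1) = m := by
      rw [hF, Fintype.piFinset_univ]
      exact (Finset.filter_congr fun f _ => hcond f).symm
    rw [hFeq, Finset.sum_filter]
    refine Finset.sum_congr rfl fun f _ => ?_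
    simp only [C_mul_X_eq_monomial]
    rw [prod_monomial_eq, MvPolynomial.coeff_monomial]
  -- Step 2: group the permanent sum by the induced function `φ ∘ σ`.
  have h2 : (∑ σ : Equiv.Perm (Fin N), ∏ i, a i (φ (σ i)))
      = ∑ f ∈ F, ((∏ s, (n s).factorial : ℕ) : R) * ∏ i, a i (f i) := by
    have hmaps : ∀ σ ∈ (Finset.univ : Finset (Equiv.Perm (Fin N))), φ ∘ σ ∈ F := by
      intro σ _
      simp only [hF, Finset.mem_filter, Finset.mem_univ, true_and]
      intro s
      exact (fiber_card_comp φ σ s).trans (hφ s)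
    rw [← Finset.sum_fiberwise_of_maps_to hmaps fun σ => ∏ i, a i (φ (σ i))]
    refine Finset.sum_congr rfl fun f hf => ?_
    have hf' : ∀ s, (Finset.univ.filter fun i => f i = s).card = n s :=
      (Finset.mem_filter.mp (hF ▸ hf)).2
    have hval : ∀ σ ∈ Finset.univ.filter fun σ : Equiv.Perm (Fin N) => φ ∘ σ = f,
        ∏ i, a i (φ (σ i)) = ∏ i, a i (f i) := by
      intro σ hσ
      have hc := (Finset.mem_filter.mp hσ).2
      exact Finset.prod_congr rfl fun i _ => congrArg (a i) (congrFun hc i)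
    rw [Finset.sum_congr rfl hval, Finset.sum_const]
    have hcard : (Finset.univ.filter fun σ : Equiv.Perm (Fin N) => φ ∘ σ = f).card
        = ∏ s, (n s).factorial := by
      rw [show (Finset.univ.filter fun σ : Equiv.Perm (Fin N) => φ ∘ σ = f)
          = Finset.univ.filter fun σ => ∀ i, φ (σ i) = f i from
        Finset.filter_congr fun σ _ => by simp [_root_.funext_iff, Function.comp]]
      exact card_perm_comp φ f n hφ hf'
    rw [hcard, nsmul_eq_mul]
  rw [h1, h2, Finset.mul_sum]
end

section
/- (m-Bézout number of the two-strategy TMNE system equals the derangement number.) Let S ≥ 1 and consider the polynomial P = ∏_{j=1}^{S} (∑_{k≠j} x_k) in ℤ[x_1,…,x_S]. Then the coefficient of the squarefree monomial x_1·x_2⋯x_S in P equals the number of derangements of a set of S elements (permutations of {1,…,S} without fixed points). -/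
open MvPolynomial Finset

lemma sum_single_apply_card (S : ℕ) (g : Fin S → Fin S) (i : Fin S) :
    (∑ j, Finsupp.single (g j) 1) i = (univ.filter fun j => g j = i).card := by
  rw [Finsupp.finset_sum_apply, Finset.card_filter]
  simp [Finsupp.single_apply]

lemma sum_single_eq_iff (S : ℕ) (g : Fin S → Fin S) :
    (∑ j, Finsupp.single (g j) 1) = (Finsupp.equivFunOnFinite.symm fun _ : Fin S => 1) ↔
      Function.Bijective g := by
  constructor
  · intro h
    have hcard : ∀ i, (univ.filter fun j => g j = i).card = 1 := by
      intro i
      have := DFunLike.congr_fun h i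
      simpa [sum_single_apply_card] using this
    constructor
    · intro a b hab
      have h1 := hcard (g a)
      rw [Finset.card_eq_one] at h1
      obtain ⟨c, hc⟩ := h1
      have ha : a ∈ univ.filter fun j => g j = g a := by simp
      have hb : b ∈ univ.filter fun j => g j = g a := by simp [hab]
      rw [hc, Finset.mem_singleton] at ha hb
      rw [ha, hb]
    · intro i
      have h1 := hcard i
      rw [Finset.card_eq_one] at h1
      obtain ⟨c, hc⟩ := h1
      refine ⟨c, ?_⟩
      have : c ∈ univ.filter fun j => g j = i := by rw [hc]; exact Finset.mem_singleton_self c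
      simpa using this
  · intro hg
    ext i
    rw [sum_single_apply_card]
    have : (univ.filter fun j => g j = i) = {(hg.2 i).choose} := by
      ext a
      simp only [Finset.mem_filter, Finset.mem_univ, true_and, Finset.mem_singleton]
      constructor
      · intro h; exact hg.1 (h.trans (hg.2 i).choose_spec.symm)
      · intro h; rw [h]; exact (hg.2 i).choose_spec
    rw [this]
    simp [Finsupp.equivFunOnFinite]
    rfl

/-- **m-Bézout number of the two-strategy TMNE system equals the derangement number.**
The coefficient of the squarefree monomial `x_1 x_2 ⋯ x_S` in
`P = ∏_{j=1}^{S} (∑_{k ≠ j} x_k)` equals the number of derangements of an `S`-element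
set. -/
theorem tmne_mBezout_eq_numDerangements (S : ℕ) (hS : 1 ≤ S) :
    MvPolynomial.coeff (Finsupp.equivFunOnFinite.symm fun _ : Fin S => 1)
      (∏ j : Fin S, ∑ k ∈ Finset.univ.erase j,
        (MvPolynomial.X k : MvPolynomial (Fin S) ℤ)) =
      numDerangements S := by
  classical
  set d : Fin S →₀ ℕ := Finsupp.equivFunOnFinite.symm fun _ : Fin S => 1 with hd
  rw [Finset.prod_univ_sum]
  have key : ∀ g : Fin S → Fin S,
      (∏ j, (X (g j) : MvPolynomial (Fin S) ℤ)) = monomial (∑ j, Finsupp.single (g j) 1) 1 := by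
    intro g
    have : ∀ t : Finset (Fin S), (∏ j ∈ t, (X (g j) : MvPolynomial (Fin S) ℤ))
        = monomial (∑ j ∈ t, Finsupp.single (g j) 1) 1 := by
      intro t
      induction t using Finset.induction with
      | empty => simp
      | insert _ _ h ih =>
        rw [Finset.prod_insert h, Finset.sum_insert h, ih, X, monomial_mul, mul_one]
    exact this univ
  simp only [MvPolynomial.coeff_sum, key, coeff_monomial]
  rw [Finset.sum_boole]
  norm_cast
  -- now goal : card of filter = numDerangements S
  have hfil : ((Fintype.piFinset fun j : Fin S => univ.erase j).filter
        fun g => (∑ j, Finsupp.single (g j) 1) = d)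
      = (Fintype.piFinset fun j : Fin S => univ.erase j).filter fun g => Function.Bijective g := by
    apply Finset.filter_congr
    intro g _
    simp [hd, sum_single_eq_iff]
  rw [hfil]
  set F := (Fintype.piFinset fun j : Fin S => univ.erase j).filter fun g => Function.Bijective g
    with hF
  have e : {g // g ∈ F} ≃ derangements (Fin S) := by
    refine
      { toFun := fun g => ⟨Equiv.ofBijective g.1 ?_, ?_⟩
        invFun := fun π => ⟨⇑π.1, ?_⟩
        left_inv := ?_, right_inv := ?_ }
    · exact (Finset.mem_filter.mp g.2).2
    · intro x hx
      have := (Fintype.mem_piFinset.mp (Finset.mem_filter.mp g.2).1) x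
      rw [Finset.mem_erase] at this
      exact this.1 hx
    · rw [hF, Finset.mem_filter]
      refine ⟨Fintype.mem_piFinset.mpr fun j => ?_, π.1.bijective⟩
      exact Finset.mem_erase.mpr ⟨π.2 j, Finset.mem_univ _⟩
    · intro g; rfl
    · intro π
      ext x
      rfl
  calc F.card = Fintype.card {g // g ∈ F} := (Fintype.card_coe F).symm
    _ = Fintype.card (derangements (Fin S)) := Fintype.card_congr e
    _ = numDerangements S := by
        rw [card_derangements_eq_numDerangements, Fintype.card_fin]
end
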